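/- arXiv:2506.17666 — 17 statements merged into one kernel-verified Lean document; each statement's English description precedes it below -/
import Mathlib

section
/- The system of equations w_b/w_i = a_{bi}, w_i/w_w = a_{iw}, w_b/w_w = a_{bw} for all i ∈ D = {1,...,n}\{b,w}, together with w_1 + w_2 + ... + w_n = 1 (all w_i > 0), has a solution if and only if the pairwise comparison system is consistent, i.e., a_{bi} · a_{iw} = a_{bw} for all i ∈ D. -/
open Finset

/-- The system has a positive normalized solution iff the PCS is consistent. -/
theorem stmt0 (n b w : ℕ) (hn : 3 ≤ n) (hb : b ∈ Icc 1 n) (hw : w ∈ Icc 1 n)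
    (hbw : b ≠ w) (ab aw : ℕ → ℝ) (abw : ℝ)
    (hab : ∀ i ∈ Icc 1 n \ {b, w}, 0 < ab i) (haw : ∀ i ∈ Icc 1 n \ {b, w}, 0 < aw i)
    (habw : 0 < abw) :
    (∃ v : ℕ → ℝ, (∀ i ∈ Icc 1 n, 0 < v i) ∧ (∑ i ∈ Icc 1 n, v i) = 1 ∧
      (∀ i ∈ Icc 1 n \ {b, w}, v b / v i = ab i ∧ v i / v w = aw i) ∧ v b / v w = abw)
    ↔ (∀ i ∈ Icc 1 n \ {b, w}, ab i * aw i = abw) := by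
  constructor
  · rintro ⟨v, hpos, hsum, hr, hv⟩ i hi
    obtain ⟨h1, h2⟩ := hr i hi
    have hiIcc : i ∈ Icc 1 n := (mem_sdiff.mp hi).1
    have hvi : v i ≠ 0 := (hpos i hiIcc).ne'
    have hvw : v w ≠ 0 := (hpos w hw).ne'
    rw [← h1, ← h2, ← hv]
    field_simp
  · intro hcons
    set u : ℕ → ℝ := fun i => if i = b then abw else if i = w then 1 else aw i with hu
    have hupos : ∀ i ∈ Icc 1 n, 0 < u i := by
      intro i hi
      simp only [hu]
      split_ifs with h1 h2
      · exact habw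
      · exact one_pos
      · exact haw i (mem_sdiff.mpr ⟨hi, by simp [h1, h2]⟩)
    set S : ℝ := ∑ i ∈ Icc 1 n, u i with hS
    have hSpos : 0 < S := by
      apply Finset.sum_pos hupos
      exact ⟨1, by simp; omega⟩
    refine ⟨fun i => u i / S, ?_, ?_, ?_, ?_⟩
    · intro i hi; exact div_pos (hupos i hi) hSpos
    · rw [← Finset.sum_div, ← hS, div_self hSpos.ne']
    · have key : ∀ x y : ℝ, y ≠ 0 → x / S / (y / S) = x / y := fun x y hy => by
        rw [div_div_div_eq, mul_comm x S, mul_div_mul_left _ _ hSpos.ne']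
      intro i hi
      have hiIcc : i ∈ Icc 1 n := (mem_sdiff.mp hi).1
      have hne : i ≠ b ∧ i ≠ w := by
        have := (mem_sdiff.mp hi).2; simp at this; tauto
      have hub : u b = abw := by simp [hu]
      have huw : u w = 1 := by simp [hu, Ne.symm hbw]
      have hui : u i = aw i := by simp [hu, hne.1, hne.2]
      have hawpos := haw i hi
      constructor
      · show u b / S / (u i / S) = ab i
        rw [key _ _ ((hupos i hiIcc).ne'), hub, hui, ← hcons i hi]
        field_simp
      · show u i / S / (u w / S) = aw i
        rw [key _ _ ((hupos w hw).ne'), hui, huw, div_one]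
    · show u b / S / (u w / S) = abw
      rw [div_div_div_eq, mul_comm (u b) S, mul_div_mul_left _ _ hSpos.ne']
      simp [hu, Ne.symm hbw]
end

section
/- If the pairwise comparison system is consistent (a_{bi} · a_{iw} = a_{bw} for all i ∈ D), then the unique normalized solution of the system w_b/w_i = a_{bi}, w_i/w_w = a_{iw}, w_b/w_w = a_{bw}, Σw_i = 1 is given by w_i = a_{iw} / (Σ_{j=1}^n a_{jw}) for all i, where a_{ww} = 1 and a_{bw} is the weight ratio for the best criterion. -/
/-! The comparisons with the worst criterion alone force any solution to be a scalar multiple of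
`awf` on `Icc 1 n`; normalization fixes the scalar, and consistency
(`ab i = abw / aw i`) makes the normalized `awf` satisfy the comparisons with the best criterion too. -/

open Finset

section Normalization

variable {ι : Type*} {s : Finset ι} {a v : ι → ℝ}

theorem Finset.forall_mem_of_forall_mem_sdiff_pair [DecidableEq ι] {P : ι → Prop} {b w : ι}
    (hb : P b) (hw : P w) (h : ∀ i ∈ s \ {b, w}, P i) : ∀ i ∈ s, P i := by
  intro i hi
  by_cases hbw : i ∈ ({b, w} : Finset ι)
  · rcases mem_insert.1 hbw with rfl | hiw
    · exact hb
    · rwa [mem_singleton.1 hiw]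
  · exact h i (mem_sdiff.2 ⟨hi, hbw⟩)

theorem eq_mul_of_div_eq_of_pair [DecidableEq ι] {b w : ι} (hvw : v w ≠ 0) (haw : a w = 1)
    (hb : v b / v w = a b) (h : ∀ i ∈ s \ {b, w}, v i / v w = a i) :
    ∀ i ∈ s, v i = a i * v w :=
  forall_mem_of_forall_mem_sdiff_pair ((div_eq_iff hvw).1 hb) (by rw [haw, one_mul])
    fun i hi => (div_eq_iff hvw).1 (h i hi)

theorem eq_div_sum_of_eq_mul {c : ℝ} (h : ∀ i ∈ s, v i = a i * c) (hsum : ∑ i ∈ s, v i = 1) :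
    ∀ i ∈ s, v i = a i / ∑ j ∈ s, a j := by
  have hc : c * ∑ j ∈ s, a j = 1 := by
    rw [mul_sum, ← hsum]
    exact sum_congr rfl fun i hi => by rw [h i hi, mul_comm]
  intro i hi
  rw [h i hi, eq_div_iff (right_ne_zero_of_mul_eq_one hc), mul_assoc, hc, mul_one]

theorem sum_div_sum_eq_one (hpos : ∀ i ∈ s, 0 < a i) (hs : s.Nonempty) :
    ∑ i ∈ s, a i / ∑ j ∈ s, a j = 1 := by
  rw [← sum_div, div_self (sum_pos hpos hs).ne']

end Normalization

theorem stmt1_general (n b w : ℕ) (hw : w ∈ Icc 1 n)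
    (hbw : b ≠ w) (ab aw : ℕ → ℝ) (abw : ℝ)
    (haw0 : ∀ i ∈ Icc 1 n \ {b, w}, 0 < aw i)
    (habw : 0 < abw)
    (hcons : ∀ i ∈ Icc 1 n \ {b, w}, ab i * aw i = abw)
    (awf : ℕ → ℝ) (hawf : ∀ i, awf i = if i = w then 1 else if i = b then abw else aw i) :
    (∀ v : ℕ → ℝ, (∀ i ∈ Icc 1 n, 0 < v i) → (∑ i ∈ Icc 1 n, v i) = 1 →
      (∀ i ∈ Icc 1 n \ {b, w}, v b / v i = ab i ∧ v i / v w = aw i) → v b / v w = abw →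
      ∀ i ∈ Icc 1 n, v i = awf i / ∑ j ∈ Icc 1 n, awf j)
    ∧ (∃ v : ℕ → ℝ, (∀ i ∈ Icc 1 n, 0 < v i) ∧ (∑ i ∈ Icc 1 n, v i) = 1 ∧
      (∀ i ∈ Icc 1 n \ {b, w}, v b / v i = ab i ∧ v i / v w = aw i) ∧ v b / v w = abw ∧
      ∀ i ∈ Icc 1 n, v i = awf i / ∑ j ∈ Icc 1 n, awf j) := by
  have hawf_w : awf w = 1 := by simp [hawf]
  have hawf_b : awf b = abw := by simp [hawf, hbw]
  have hawf_D : ∀ i ∈ Icc 1 n \ {b, w}, awf i = aw i := fun i hi => by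
    have hi' : i ≠ b ∧ i ≠ w := by simpa using (mem_sdiff.1 hi).2
    simp [hawf, hi'.1, hi'.2]
  have hpos : ∀ i ∈ Icc 1 n, 0 < awf i :=
    forall_mem_of_forall_mem_sdiff_pair (hawf_b ▸ habw) (hawf_w ▸ one_pos)
      fun i hi => hawf_D i hi ▸ haw0 i hi
  have hS : ∑ j ∈ Icc 1 n, awf j ≠ 0 := (sum_pos hpos ⟨w, hw⟩).ne'
  refine ⟨fun v hv hsum hvr hvbw => eq_div_sum_of_eq_mul
      (eq_mul_of_div_eq_of_pair (hv w hw).ne' hawf_w (hawf_b ▸ hvbw)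
        fun i hi => hawf_D i hi ▸ (hvr i hi).2) hsum,
    fun i => awf i / ∑ j ∈ Icc 1 n, awf j, fun i hi => div_pos (hpos i hi) (sum_pos hpos ⟨w, hw⟩),
    sum_div_sum_eq_one hpos ⟨w, hw⟩, fun i hi => ⟨?_, ?_⟩, ?_, fun _ _ => rfl⟩
  · rw [div_div_div_cancel_right₀ hS, hawf_b, hawf_D i hi, ← hcons i hi,
      mul_div_cancel_right₀ _ (haw0 i hi).ne']
  · rw [div_div_div_cancel_right₀ hS, hawf_D i hi, hawf_w, div_one]
  · rw [div_div_div_cancel_right₀ hS, hawf_b, hawf_w, div_one]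

/-- Under consistency, the unique normalized solution is w_i = a_{iw}/Σ_j a_{jw},
with the conventions a_{ww} = 1 and a_{bw} for the best criterion. -/
theorem stmt1 (n b w : ℕ) (hn : 3 ≤ n) (hb : b ∈ Icc 1 n) (hw : w ∈ Icc 1 n)
    (hbw : b ≠ w) (ab aw : ℕ → ℝ) (abw : ℝ)
    (hab : ∀ i ∈ Icc 1 n \ {b, w}, 0 < ab i) (haw0 : ∀ i ∈ Icc 1 n \ {b, w}, 0 < aw i)
    (habw : 0 < abw)
    (hcons : ∀ i ∈ Icc 1 n \ {b, w}, ab i * aw i = abw)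
    (awf : ℕ → ℝ) (hawf : ∀ i, awf i = if i = w then 1 else if i = b then abw else aw i) :
    (∀ v : ℕ → ℝ, (∀ i ∈ Icc 1 n, 0 < v i) → (∑ i ∈ Icc 1 n, v i) = 1 →
      (∀ i ∈ Icc 1 n \ {b, w}, v b / v i = ab i ∧ v i / v w = aw i) → v b / v w = abw →
      ∀ i ∈ Icc 1 n, v i = awf i / ∑ j ∈ Icc 1 n, awf j)
    ∧ (∃ v : ℕ → ℝ, (∀ i ∈ Icc 1 n, 0 < v i) ∧ (∑ i ∈ Icc 1 n, v i) = 1 ∧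
      (∀ i ∈ Icc 1 n \ {b, w}, v b / v i = ab i ∧ v i / v w = aw i) ∧ v b / v w = abw ∧
      ∀ i ∈ Icc 1 n, v i = awf i / ∑ j ∈ Icc 1 n, awf j) :=
  stmt1_general n b w hw hbw ab aw abw haw0 habw hcons awf hawf
end

section
/- For any weight set W = (w_1,...,w_n) with Σw_i = 1 and w_i ≥ 0, and any i ∈ D, the quantity ε_i · w_w is at most ε_W, where ε_i = |a_{bi}·a_{iw} − a_{bw}|/(a_{bi}+2) and ε_W = max over i ∈ D of {|w_b − a_{bi}w_i|, |w_i − a_{iw}w_w|, |w_b − a_{bw}w_w|}. -/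
open Finset

noncomputable def epsW (D : Finset ℕ) (hD : D.Nonempty) (b w : ℕ)
    (ab aw : ℕ → ℝ) (abw : ℝ) (v : ℕ → ℝ) : ℝ :=
  D.sup' hD fun i =>
    max |v b - ab i * v i| (max |v i - aw i * v w| |v b - abw * v w|)

noncomputable def epsi (ab aw : ℕ → ℝ) (abw : ℝ) (i : ℕ) : ℝ :=
  |ab i * aw i - abw| / (ab i + 2)

noncomputable def epsij (ab aw : ℕ → ℝ) (i j : ℕ) : ℝ :=
  |ab i * aw i - ab j * aw j| / (ab i + ab j + 2)

noncomputable def eta (D : Finset ℕ) (hD : D.Nonempty) (ab aw : ℕ → ℝ) (abw : ℝ) : ℝ :=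
  (D ×ˢ D).sup' (hD.product hD) fun p =>
    max (epsi ab aw abw p.1) (epsij ab aw p.1 p.2)

/-- ε_i · w_w ≤ ε_W for every normalized nonnegative weight set. -/
theorem stmt2 (n b w : ℕ) (hn : 3 ≤ n) (hb : b ∈ Icc 1 n) (hw : w ∈ Icc 1 n) (hbw : b ≠ w)
    (ab aw : ℕ → ℝ) (abw : ℝ)
    (hab : ∀ i ∈ Icc 1 n \ {b, w}, 0 < ab i) (haw : ∀ i ∈ Icc 1 n \ {b, w}, 0 < aw i)
    (habw : 0 < abw)
    (hD : (Icc 1 n \ {b, w}).Nonempty)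
    (v : ℕ → ℝ) (hv0 : ∀ i ∈ Icc 1 n, 0 ≤ v i) (hv1 : (∑ i ∈ Icc 1 n, v i) = 1)
    (i : ℕ) (hi : i ∈ Icc 1 n \ {b, w}) :
    epsi ab aw abw i * v w ≤ epsW (Icc 1 n \ {b, w}) hD b w ab aw abw v := by
  have habi := hab i hi
  have hvw : 0 ≤ v w := hv0 w hw
  set E := epsW (Icc 1 n \ {b, w}) hD b w ab aw abw v with hE
  have hle : max |v b - ab i * v i| (max |v i - aw i * v w| |v b - abw * v w|) ≤ E :=
    by
    rw [hE, epsW]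
    exact Finset.le_sup' (fun j => max |v b - ab j * v j| (max |v j - aw j * v w| |v b - abw * v w|)) hi
  have h1 : |v b - ab i * v i| ≤ E := le_trans (le_max_left _ _) hle
  have h2 : |v i - aw i * v w| ≤ E := le_trans (le_trans (le_max_left _ _) (le_max_right _ _)) hle
  have h3 : |v b - abw * v w| ≤ E := le_trans (le_trans (le_max_right _ _) (le_max_right _ _)) hle
  have hpos : 0 < ab i + 2 := by linarith
  rw [epsi, div_mul_eq_mul_div, div_le_iff₀ hpos]
  have key : |ab i * aw i - abw| * v w ≤ ab i * E + E + E := by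
    have heq : |ab i * aw i - abw| * v w = |(ab i * aw i - abw) * v w| := by
      rw [abs_mul, abs_of_nonneg hvw]
    rw [heq]
    have hdecomp : (ab i * aw i - abw) * v w
        = ab i * (aw i * v w - v i) + (ab i * v i - v b) + (v b - abw * v w) := by ring
    rw [hdecomp]
    calc |ab i * (aw i * v w - v i) + (ab i * v i - v b) + (v b - abw * v w)|
        ≤ |ab i * (aw i * v w - v i) + (ab i * v i - v b)| + |v b - abw * v w| := abs_add_le _ _
      _ ≤ |ab i * (aw i * v w - v i)| + |ab i * v i - v b| + |v b - abw * v w| := by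
          gcongr; exact abs_add_le _ _
      _ ≤ ab i * E + E + E := by
          gcongr
          · rw [abs_mul, abs_of_pos habi, abs_sub_comm]
            exact mul_le_mul_of_nonneg_left h2 habi.le
          · rw [abs_sub_comm]; exact h1
  linarith
end

section
/- For any weight set W = (w_1,...,w_n) with Σw_i = 1 and w_i ≥ 0, and any i, j ∈ D, the quantity ε_{i,j} · w_w is at most ε_W, where ε_{i,j} = |a_{bi}·a_{iw} − a_{bj}·a_{jw}|/(a_{bi}+a_{bj}+2). -/
open Finset

/-- ε_{i,j} · w_w ≤ ε_W for every normalized nonnegative weight set. -/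
theorem stmt3 (n b w : ℕ) (hn : 3 ≤ n) (hb : b ∈ Icc 1 n) (hw : w ∈ Icc 1 n) (hbw : b ≠ w)
    (ab aw : ℕ → ℝ) (abw : ℝ)
    (hab : ∀ i ∈ Icc 1 n \ {b, w}, 0 < ab i) (haw : ∀ i ∈ Icc 1 n \ {b, w}, 0 < aw i)
    (habw : 0 < abw)
    (hD : (Icc 1 n \ {b, w}).Nonempty)
    (v : ℕ → ℝ) (hv0 : ∀ i ∈ Icc 1 n, 0 ≤ v i) (hv1 : (∑ i ∈ Icc 1 n, v i) = 1)
    (i j : ℕ) (hi : i ∈ Icc 1 n \ {b, w}) (hj : j ∈ Icc 1 n \ {b, w}) :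
    epsij ab aw i j * v w ≤ epsW (Icc 1 n \ {b, w}) hD b w ab aw abw v := by
  set D := Icc 1 n \ {b, w} with hDdef
  set E := epsW D hD b w ab aw abw v with hE
  have key : ∀ k ∈ D, |v b - ab k * v k| ≤ E ∧ |v k - aw k * v w| ≤ E := by
    intro k hk
    have h := Finset.le_sup' (fun i =>
      max |v b - ab i * v i| (max |v i - aw i * v w| |v b - abw * v w|)) hk
    constructor
    · exact le_trans (le_max_left _ _) h
    · exact le_trans (le_trans (le_max_left _ _) (le_max_right _ _)) h
  have habi := hab i hi
  have habj := hab j hj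
  have hvw : 0 ≤ v w := hv0 w hw
  have bound : ∀ k ∈ D, |v b - ab k * aw k * v w| ≤ (1 + ab k) * E := by
    intro k hk
    obtain ⟨h1, h2⟩ := key k hk
    have habk := hab k hk
    have : v b - ab k * aw k * v w = (v b - ab k * v k) + ab k * (v k - aw k * v w) := by
      ring
    rw [this]
    calc |(v b - ab k * v k) + ab k * (v k - aw k * v w)|
        ≤ |v b - ab k * v k| + |ab k * (v k - aw k * v w)| := abs_add_le _ _
      _ = |v b - ab k * v k| + ab k * |v k - aw k * v w| := by
          rw [abs_mul, abs_of_pos habk]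
      _ ≤ E + ab k * E := by
          gcongr
      _ = (1 + ab k) * E := by ring
  have hmain : |ab i * aw i - ab j * aw j| * v w ≤ (ab i + ab j + 2) * E := by
    have h3 : |ab i * aw i - ab j * aw j| * v w = |(v b - ab j * aw j * v w) - (v b - ab i * aw i * v w)| := by
      rw [show (v b - ab j * aw j * v w) - (v b - ab i * aw i * v w)
          = (ab i * aw i - ab j * aw j) * v w by ring, abs_mul, abs_of_nonneg hvw]
    rw [h3]
    calc |(v b - ab j * aw j * v w) - (v b - ab i * aw i * v w)|
        ≤ |v b - ab j * aw j * v w| + |v b - ab i * aw i * v w| := abs_sub _ _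
      _ ≤ (1 + ab j) * E + (1 + ab i) * E := by
          gcongr
          exacts [bound j hj, bound i hi]
      _ = (ab i + ab j + 2) * E := by ring
  have hden : 0 < ab i + ab j + 2 := by linarith
  rw [epsij, div_mul_eq_mul_div, div_le_iff₀ hden]
  linarith [hmain]
end

section
/- If i, j ∈ D both satisfy a_{bi}·a_{iw} ≤ a_{bw} and a_{bj}·a_{jw} ≤ a_{bw} (or both satisfy the reverse inequality ≥), and ε_{i,j} > 0, then ε_{i,j} < max{ε_i, ε_j}, where ε_i = |a_{bi}·a_{iw} − a_{bw}|/(a_{bi}+2) and ε_{i,j} = |a_{bi}·a_{iw} − a_{bj}·a_{jw}|/(a_{bi}+a_{bj}+2). -/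
/-- if i,j lie on the same side of a_{bw} and ε_{i,j} > 0 then
ε_{i,j} < max{ε_i, ε_j}. -/
theorem stmt4 (abi aiw abj ajw abw : ℝ)
    (h1 : 0 < abi) (h2 : 0 < aiw) (h3 : 0 < abj) (h4 : 0 < ajw) (h5 : 0 < abw)
    (hside : (abi * aiw ≤ abw ∧ abj * ajw ≤ abw) ∨ (abw ≤ abi * aiw ∧ abw ≤ abj * ajw))
    (hpos : 0 < |abi * aiw - abj * ajw| / (abi + abj + 2)) :
    |abi * aiw - abj * ajw| / (abi + abj + 2) <
      max (|abi * aiw - abw| / (abi + 2)) (|abj * ajw - abw| / (abj + 2)) := by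
  have hs : 0 < abi + abj + 2 := by linarith
  have hi2 : (0:ℝ) < abi + 2 := by linarith
  have hj2 : (0:ℝ) < abj + 2 := by linarith
  have hne : abi * aiw ≠ abj * ajw := by
    intro h
    rw [h, sub_self, abs_zero, zero_div] at hpos
    exact lt_irrefl 0 hpos
  rcases hside with ⟨hi, hj⟩ | ⟨hi, hj⟩ <;>
    rcases lt_or_gt_of_ne hne with h | h
  · rw [lt_max_iff]; left
    rw [abs_of_neg (by linarith), abs_of_nonpos (by linarith),
      div_lt_div_iff₀ hs hi2]
    nlinarith [mul_pos h3 (show (0:ℝ) < abw - abi * aiw by linarith)]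
  · rw [lt_max_iff]; right
    rw [abs_of_pos (by linarith), abs_of_nonpos (by linarith),
      div_lt_div_iff₀ hs hj2]
    nlinarith [mul_pos h1 (show (0:ℝ) < abw - abj * ajw by linarith)]
  · rw [lt_max_iff]; right
    rw [abs_of_neg (by linarith), abs_of_nonneg (by linarith),
      div_lt_div_iff₀ hs hj2]
    nlinarith [mul_pos h1 (show (0:ℝ) < abj * ajw - abw by linarith)]
  · rw [lt_max_iff]; left
    rw [abs_of_pos (by linarith), abs_of_nonneg (by linarith),
      div_lt_div_iff₀ hs hi2]
    nlinarith [mul_pos h3 (show (0:ℝ) < abi * aiw - abw by linarith)]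
end

section
/- Suppose η = ε_{i₀} for some i₀ ∈ D₁ (i.e., a_{bi₀}·a_{i₀w} < a_{bw} and ε_{i₀} is the maximum of all ε_i and ε_{i,j}). Then for every i ∈ D with a_{bi}·a_{iw} < a_{bw} − ε_{i₀}, one has (a_{bw} − ε_{i₀} − a_{bi}·a_{iw})/(a_{bi}+1) ≤ ε_{i₀}. -/
open Finset

/-- if η = ε_{i₀} with i₀ ∈ D₁, then for i ∈ D with
a_{bi}a_{iw} < a_{bw} − ε_{i₀}, one has (a_{bw} − ε_{i₀} − a_{bi}a_{iw})/(a_{bi}+1) ≤ ε_{i₀}. -/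
theorem stmt5 (n b w : ℕ) (hn : 3 ≤ n) (hb : b ∈ Icc 1 n) (hw : w ∈ Icc 1 n) (hbw : b ≠ w)
    (ab aw : ℕ → ℝ) (abw : ℝ)
    (hab : ∀ i ∈ Icc 1 n \ {b, w}, 0 < ab i) (haw : ∀ i ∈ Icc 1 n \ {b, w}, 0 < aw i)
    (habw : 0 < abw)
    (hD : (Icc 1 n \ {b, w}).Nonempty)
    (i0 : ℕ) (hi0 : i0 ∈ Icc 1 n \ {b, w}) (hi0D1 : ab i0 * aw i0 < abw)
    (heta : eta (Icc 1 n \ {b, w}) hD ab aw abw = epsi ab aw abw i0)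
    (i : ℕ) (hi : i ∈ Icc 1 n \ {b, w}) (hlt : ab i * aw i < abw - epsi ab aw abw i0) :
    (abw - epsi ab aw abw i0 - ab i * aw i) / (ab i + 1) ≤ epsi ab aw abw i0 := by
  have hai : 0 < ab i := hab i hi
  set e := epsi ab aw abw i0 with he
  have hle2 : epsi ab aw abw i ≤ e := by
    rw [← heta]
    have := Finset.le_sup' (fun p : ℕ × ℕ =>
      max (epsi ab aw abw p.1) (epsij ab aw p.1 p.2))
      (Finset.mk_mem_product hi hi)
    exact le_trans (le_max_left _ _) this
  have hnonneg : 0 ≤ e := by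
    rw [he]; unfold epsi
    have : 0 < ab i0 + 2 := by linarith [hab i0 hi0]
    positivity
  have hkey : abw - ab i * aw i ≤ e * (ab i + 2) := by
    have habs : |ab i * aw i - abw| = abw - ab i * aw i := by
      rw [abs_of_nonpos] <;> linarith
    have h2 : 0 < ab i + 2 := by linarith
    rw [epsi, habs, div_le_iff₀ h2] at hle2
    linarith [hle2]
  rw [div_le_iff₀ (by linarith : (0:ℝ) < ab i + 1)]
  nlinarith
end

section
/- Suppose η = ε_{i₀} for some i₀ ∈ D₁ and i ∈ D satisfies a_{bi}·a_{iw} ≥ a_{bw} − ε_{i₀}. Then 0 ≤ (a_{bi}·a_{iw} − a_{bw} + ε_{i₀})/(a_{bi}+1) ≤ ε_{i,i₀} ≤ ε_{i₀}, where ε_{i,i₀} = (a_{bi}·a_{iw} − a_{bi₀}·a_{i₀w})/(a_{bi}+a_{bi₀}+2). -/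
open Finset

/-! Write `p = a_{bi} a_{iw}`, `p₀ = a_{bi₀} a_{i₀w}` and `e = ε_{i₀}`; as `i₀ ∈ D₁`,
`e (a_{bi₀} + 2) = a_{bw} - p₀`. Clearing denominators, the second inequality becomes
`(a_{bi₀} + 1) (p - p₀) ≤ (a_{bi₀} + 1) e (a_{bi} + a_{bi₀} + 2)`, which follows from
`ε_{i,i₀} ≤ η = ε_{i₀}` since `p - p₀ ≤ |p - p₀|`. -/

theorem epsij_le_eta {D : Finset ℕ} (hD : D.Nonempty) (ab aw : ℕ → ℝ) (abw : ℝ) {i j : ℕ}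
    (hi : i ∈ D) (hj : j ∈ D) : epsij ab aw i j ≤ eta D hD ab aw abw :=
  (le_max_right _ _).trans <|
    le_sup' (fun p : ℕ × ℕ => max (epsi ab aw abw p.1) (epsij ab aw p.1 p.2))
      (mem_product.2 ⟨hi, hj⟩ : (i, j) ∈ D ×ˢ D)

theorem epsi_mul_of_lt {ab aw : ℕ → ℝ} {abw : ℝ} {i : ℕ} (hi : ab i + 2 ≠ 0)
    (hlt : ab i * aw i < abw) : epsi ab aw abw i * (ab i + 2) = abw - ab i * aw i := by
  rw [epsi, abs_of_neg (sub_neg.2 hlt), div_mul_cancel₀ _ hi, neg_sub]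

theorem sub_add_div_le_sub_div_of_mul_eq {a c p p₀ q e : ℝ} (ha : 0 < a + 1) (hc : 0 < c + 1)
    (he : e * (c + 2) = q - p₀) (hpe : (p - p₀) / (a + c + 2) ≤ e) :
    (p - q + e) / (a + 1) ≤ (p - p₀) / (a + c + 2) := by
  have hac : 0 < a + c + 2 := by linarith
  rw [div_le_iff₀ hac] at hpe
  rw [div_le_div_iff₀ ha hac]
  nlinarith [mul_le_mul_of_nonneg_left hpe hc.le]

theorem stmt6_general (n b w : ℕ)
    (ab aw : ℕ → ℝ) (abw : ℝ)
    (hab : ∀ i ∈ Icc 1 n \ {b, w}, 0 < ab i)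
    (hD : (Icc 1 n \ {b, w}).Nonempty)
    (i0 : ℕ) (hi0 : i0 ∈ Icc 1 n \ {b, w}) (hi0D1 : ab i0 * aw i0 < abw)
    (heta : eta (Icc 1 n \ {b, w}) hD ab aw abw = epsi ab aw abw i0)
    (i : ℕ) (hi : i ∈ Icc 1 n \ {b, w}) (hge : abw - epsi ab aw abw i0 ≤ ab i * aw i) :
    0 ≤ (ab i * aw i - abw + epsi ab aw abw i0) / (ab i + 1) ∧
    (ab i * aw i - abw + epsi ab aw abw i0) / (ab i + 1) ≤ epsij ab aw i i0 ∧
    epsij ab aw i i0 ≤ epsi ab aw abw i0 := by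
  have hai := hab i hi
  have hai0 := hab i0 hi0
  have hepsi0 := epsi_mul_of_lt (by linarith) hi0D1
  have hepsij : epsij ab aw i i0 ≤ epsi ab aw abw i0 := heta ▸ epsij_le_eta hD ab aw abw hi hi0
  have hle_abs : (ab i * aw i - ab i0 * aw i0) / (ab i + ab i0 + 2) ≤ epsij ab aw i i0 :=
    div_le_div_of_nonneg_right (le_abs_self _) (by linarith)
  refine ⟨div_nonneg (by linarith) (by linarith), ?_, hepsij⟩
  exact (sub_add_div_le_sub_div_of_mul_eq (by linarith) (by linarith) hepsi0
    (hle_abs.trans hepsij)).trans hle_abs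

/-- if η = ε_{i₀} with i₀ ∈ D₁ and a_{bi}a_{iw} ≥ a_{bw} − ε_{i₀}, then
0 ≤ (a_{bi}a_{iw} − a_{bw} + ε_{i₀})/(a_{bi}+1) ≤ ε_{i,i₀} ≤ ε_{i₀}. -/
theorem stmt6 (n b w : ℕ) (hn : 3 ≤ n) (hb : b ∈ Icc 1 n) (hw : w ∈ Icc 1 n) (hbw : b ≠ w)
    (ab aw : ℕ → ℝ) (abw : ℝ)
    (hab : ∀ i ∈ Icc 1 n \ {b, w}, 0 < ab i) (haw : ∀ i ∈ Icc 1 n \ {b, w}, 0 < aw i)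
    (habw : 0 < abw)
    (hD : (Icc 1 n \ {b, w}).Nonempty)
    (i0 : ℕ) (hi0 : i0 ∈ Icc 1 n \ {b, w}) (hi0D1 : ab i0 * aw i0 < abw)
    (heta : eta (Icc 1 n \ {b, w}) hD ab aw abw = epsi ab aw abw i0)
    (i : ℕ) (hi : i ∈ Icc 1 n \ {b, w}) (hge : abw - epsi ab aw abw i0 ≤ ab i * aw i) :
    0 ≤ (ab i * aw i - abw + epsi ab aw abw i0) / (ab i + 1) ∧
    (ab i * aw i - abw + epsi ab aw abw i0) / (ab i + 1) ≤ epsij ab aw i i0 ∧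
    epsij ab aw i i0 ≤ epsi ab aw abw i0 :=
  stmt6_general n b w ab aw abw hab hD i0 hi0 hi0D1 heta i hi hge
end

section
/- There exists a weight set W with ε_W = η · w_w, i.e., the set 𝒲_η = {W ∈ 𝒲 : ε_W = η · w_w} is nonempty, where η is the maximum of the quantities ε_i and ε_{i,j} over i, j ∈ D. -/
open Finset

set_option maxHeartbeats 2000000 in
/-- the block 𝒲_η is nonempty: some normalized nonnegative weight set W
satisfies ε_W = η · w_w. -/
theorem stmt7 (n b w : ℕ) (hn : 3 ≤ n) (hb : b ∈ Icc 1 n) (hw : w ∈ Icc 1 n) (hbw : b ≠ w)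
    (ab aw : ℕ → ℝ) (abw : ℝ)
    (hab : ∀ i ∈ Icc 1 n \ {b, w}, 0 < ab i) (haw : ∀ i ∈ Icc 1 n \ {b, w}, 0 < aw i)
    (habw : 0 < abw)
    (hD : (Icc 1 n \ {b, w}).Nonempty) :
    ∃ v : ℕ → ℝ, (∀ i ∈ Icc 1 n, 0 ≤ v i) ∧ (∑ i ∈ Icc 1 n, v i) = 1 ∧
      epsW (Icc 1 n \ {b, w}) hD b w ab aw abw v = eta (Icc 1 n \ {b, w}) hD ab aw abw * v w := by
  classical
  set D := Icc 1 n \ {b, w} with hDdef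
  have hmemD : ∀ i ∈ D, i ∈ Icc 1 n ∧ i ≠ b ∧ i ≠ w := by
    intro i hi
    rw [hDdef, Finset.mem_sdiff] at hi
    simp only [Finset.mem_insert, Finset.mem_singleton] at hi
    tauto
  set η := eta D hD ab aw abw with hηdef
  have hepsi_le : ∀ i ∈ D, epsi ab aw abw i ≤ η := by
    intro i hi
    rw [hηdef, eta]
    have hm : (i, i) ∈ D ×ˢ D := Finset.mem_product.mpr ⟨hi, hi⟩
    have h := Finset.le_sup' (fun p : ℕ × ℕ => max (epsi ab aw abw p.1) (epsij ab aw p.1 p.2)) hm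
    simp only at h
    exact le_trans (le_max_left _ _) h
  have hepsij_le : ∀ i ∈ D, ∀ j ∈ D, epsij ab aw i j ≤ η := by
    intro i hi j hj
    rw [hηdef, eta]
    have hm : (i, j) ∈ D ×ˢ D := Finset.mem_product.mpr ⟨hi, hj⟩
    have h := Finset.le_sup' (fun p : ℕ × ℕ => max (epsi ab aw abw p.1) (epsij ab aw p.1 p.2)) hm
    simp only at h
    exact le_trans (le_max_right _ _) h
  obtain ⟨i0, hi0⟩ := id hD
  have hη0 : 0 ≤ η := by
    refine le_trans ?_ (hepsi_le i0 hi0)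
    unfold epsi
    exact div_nonneg (abs_nonneg _) (by have := hab i0 hi0; linarith)
  have hkey1 : ∀ i ∈ D, |ab i * aw i - abw| ≤ (ab i + 2) * η := by
    intro i hi
    have h := hepsi_le i hi
    unfold epsi at h
    have hd : (0:ℝ) < ab i + 2 := by have := hab i hi; linarith
    rw [div_le_iff₀ hd] at h
    linarith [h]
  have hkey2 : ∀ i ∈ D, ∀ j ∈ D, |ab i * aw i - ab j * aw j| ≤ (ab i + ab j + 2) * η := by
    intro i hi j hj
    have h := hepsij_le i hi j hj
    unfold epsij at h
    have hd : (0:ℝ) < ab i + ab j + 2 := by have := hab i hi; have := hab j hj; linarith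
    rw [div_le_iff₀ hd] at h
    linarith [h]
  -- choose c = x_b
  set c := min (abw + η) (D.inf' hD fun i => ab i * aw i + (ab i + 1) * η) with hcdef
  have hc_pos : 0 < c := by
    refine lt_min (by linarith) ?_
    rw [Finset.lt_inf'_iff]
    intro i hi
    have h1 := hab i hi; have h2 := haw i hi
    nlinarith
  have hc_le1 : c ≤ abw + η := min_le_left _ _
  have hc_le2 : ∀ i ∈ D, c ≤ ab i * aw i + (ab i + 1) * η := by
    intro i hi
    exact le_trans (min_le_right _ _) (Finset.inf'_le _ hi)
  have hc_ge1 : abw - η ≤ c := by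
    refine le_min (by linarith) ?_
    rw [Finset.le_inf'_iff]
    intro i hi
    have h := abs_le.mp (hkey1 i hi)
    nlinarith [h.1, h.2]
  have hc_ge2 : ∀ i ∈ D, ab i * aw i - (ab i + 1) * η ≤ c := by
    intro i hi
    refine le_min ?_ ?_
    · have h := abs_le.mp (hkey1 i hi)
      nlinarith [h.1, h.2]
    · rw [Finset.le_inf'_iff]
      intro j hj
      have h := abs_le.mp (hkey2 i hi j hj)
      nlinarith [h.1, h.2]
  -- unnormalized weights
  set xv : ℕ → ℝ := fun k =>
    if k = b then c else if k = w then 1 else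
      if k ∈ D then min (aw k + η) ((c + η) / ab k) else 0 with hxvdef
  have hxvb : xv b = c := by simp [hxvdef]
  have hxvw : xv w = 1 := by simp [hxvdef, Ne.symm hbw]
  have hxvD : ∀ i ∈ D, xv i = min (aw i + η) ((c + η) / ab i) := by
    intro i hi
    obtain ⟨_, hib, hiw⟩ := hmemD i hi
    simp [hxvdef, hib, hiw, hi]
  have hxv_nonneg : ∀ k, 0 ≤ xv k := by
    intro k
    simp only [hxvdef]
    split_ifs with h1 h2 h3
    · exact hc_pos.le
    · norm_num
    · refine le_min ?_ ?_
      · have := haw k h3; linarith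
      · have := hab k h3
        positivity
    · exact le_refl _
  -- residual bounds
  have hres2 : ∀ i ∈ D, |xv i - aw i| ≤ η := by
    intro i hi
    rw [hxvD i hi]
    have hai := hab i hi
    have hdiv : aw i - η ≤ (c + η) / ab i := by
      rw [le_div_iff₀ hai]
      have := hc_ge2 i hi
      nlinarith
    rw [abs_le]
    constructor
    · have : aw i - η ≤ min (aw i + η) ((c + η) / ab i) := le_min (by linarith) hdiv
      linarith
    · have : min (aw i + η) ((c + η) / ab i) ≤ aw i + η := min_le_left _ _
      linarith
  have hres1 : ∀ i ∈ D, |c - ab i * xv i| ≤ η := by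
    intro i hi
    rw [hxvD i hi]
    have hai := hab i hi
    have hdiv : ab i * ((c + η) / ab i) = c + η := by field_simp
    rw [abs_le]
    constructor
    · -- c - ab i * min ... ≥ -η  i.e.  ab i * min ... ≤ c + η
      have h1 : ab i * min (aw i + η) ((c + η) / ab i) ≤ ab i * ((c + η) / ab i) :=
        mul_le_mul_of_nonneg_left (min_le_right _ _) hai.le
      rw [hdiv] at h1
      linarith
    · -- c - ab i * min ... ≤ η  i.e.  c - η ≤ ab i * min ...
      rcases min_cases (aw i + η) ((c + η) / ab i) with ⟨heq, _⟩ | ⟨heq, _⟩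
      · rw [heq]
        have := hc_le2 i hi
        nlinarith
      · rw [heq, hdiv]
        linarith
  have hres3 : |c - abw| ≤ η := by
    rw [abs_le]; constructor <;> linarith
  -- normalization
  set S := ∑ k ∈ Icc 1 n, xv k with hSdef
  have hS_pos : 0 < S := by
    refine Finset.sum_pos' (fun k _ => hxv_nonneg k) ⟨b, hb, ?_⟩
    rw [hxvb]; exact hc_pos
  have hSne : S ≠ 0 := hS_pos.ne'
  refine ⟨fun k => xv k / S, fun i _ => div_nonneg (hxv_nonneg i) hS_pos.le, ?_, ?_⟩
  · rw [← Finset.sum_div, ← hSdef, div_self hSne]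
  · -- the main equation
    set v : ℕ → ℝ := fun k => xv k / S with hvdef
    have hvk : ∀ k, v k = xv k / S := fun k => rfl
    have hvb : v b = c / S := by rw [hvk, hxvb]
    have hvw : v w = 1 / S := by rw [hvk, hxvw]
    have hvw_pos : 0 < v w := by rw [hvw]; positivity
    apply le_antisymm
    · -- epsW v ≤ η * v w
      rw [epsW, hvw]
      apply Finset.sup'_le
      intro i hi
      refine max_le ?_ (max_le ?_ ?_)
      · have heq : v b - ab i * v i = (c - ab i * xv i) / S := by
          rw [hvb, hvk i]; ring
        rw [heq, abs_div, abs_of_pos hS_pos, mul_one_div]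
        exact div_le_div_of_nonneg_right (hres1 i hi) hS_pos.le
      · have heq : v i - aw i * (1 / S) = (xv i - aw i) / S := by
          rw [hvk i]; ring
        rw [heq, abs_div, abs_of_pos hS_pos, mul_one_div]
        exact div_le_div_of_nonneg_right (hres2 i hi) hS_pos.le
      · have heq : v b - abw * (1 / S) = (c - abw) / S := by
          rw [hvb]; ring
        rw [heq, abs_div, abs_of_pos hS_pos, mul_one_div]
        exact div_le_div_of_nonneg_right hres3 hS_pos.le
    · -- η * v w ≤ epsW v
      set E := epsW D hD b w ab aw abw v with hEdef
      have hbound : ∀ i ∈ D,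
          |v b - ab i * v i| ≤ E ∧ |v i - aw i * v w| ≤ E ∧ |v b - abw * v w| ≤ E := by
        intro i hi
        have hE : E = D.sup' hD
            (fun i => max |v b - ab i * v i| (max |v i - aw i * v w| |v b - abw * v w|)) := by
          rw [hEdef, epsW]
        have h := Finset.le_sup'
          (fun i => max |v b - ab i * v i| (max |v i - aw i * v w| |v b - abw * v w|)) hi
        rw [← hE] at h
        exact ⟨le_trans (le_max_left _ _) h,
          le_trans (le_trans (le_max_left _ _) (le_max_right _ _)) h,
          le_trans (le_trans (le_max_right _ _) (le_max_right _ _)) h⟩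
      clear_value E v S xv c η
      rw [← le_div_iff₀ hvw_pos]
      rw [hηdef, eta]
      apply Finset.sup'_le
      rintro ⟨i, j⟩ hp
      rw [Finset.mem_product] at hp
      obtain ⟨hi, hj⟩ := hp
      obtain ⟨h1i, h2i, h3⟩ := hbound i hi
      obtain ⟨h1j, h2j, _⟩ := hbound j hj
      have hai := hab i hi
      have haj := hab j hj
      have e1i := abs_le.mp h1i
      have e2i := abs_le.mp h2i
      have e3 := abs_le.mp h3
      have e1j := abs_le.mp h1j
      have e2j := abs_le.mp h2j
      refine max_le ?_ ?_
      · -- epsi i ≤ E / v w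
        rw [epsi, div_le_div_iff₀ (by linarith) hvw_pos]
        have : |ab i * aw i - abw| * v w = |(ab i * aw i - abw) * v w| := by
          rw [abs_mul, abs_of_pos hvw_pos]
        rw [this, abs_le]
        constructor
        · nlinarith [mul_le_mul_of_nonneg_left e2i.1 hai.le,
            mul_le_mul_of_nonneg_left e2i.2 hai.le]
        · nlinarith [mul_le_mul_of_nonneg_left e2i.1 hai.le,
            mul_le_mul_of_nonneg_left e2i.2 hai.le]
      · -- epsij i j ≤ E / v w
        rw [epsij, div_le_div_iff₀ (by linarith) hvw_pos]
        have : |ab i * aw i - ab j * aw j| * v w = |(ab i * aw i - ab j * aw j) * v w| := by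
          rw [abs_mul, abs_of_pos hvw_pos]
        rw [this, abs_le]
        constructor
        · nlinarith [mul_le_mul_of_nonneg_left e2i.1 hai.le,
            mul_le_mul_of_nonneg_left e2i.2 hai.le,
            mul_le_mul_of_nonneg_left e2j.1 haj.le,
            mul_le_mul_of_nonneg_left e2j.2 haj.le]
        · nlinarith [mul_le_mul_of_nonneg_left e2i.1 hai.le,
            mul_le_mul_of_nonneg_left e2i.2 hai.le,
            mul_le_mul_of_nonneg_left e2j.1 haj.le,
            mul_le_mul_of_nonneg_left e2j.2 haj.le]
end

section
/- Let i₀ ∈ D₁ with η = ε_{i₀}, and let W ∈ 𝒲 satisfy ε_W = ε_{i₀} · w_w. Then w_b = (a_{bw} − ε_{i₀}) · w_w and w_{i₀} = (a_{i₀w} + ε_{i₀}) · w_w. -/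
open Finset

/-- if η = ε_{i₀}, i₀ ∈ D₁ and ε_W = ε_{i₀}·w_w, then
w_b = (a_{bw} − ε_{i₀})·w_w and w_{i₀} = (a_{i₀w} + ε_{i₀})·w_w. -/
theorem stmt8 (n b w : ℕ) (hn : 3 ≤ n) (hb : b ∈ Icc 1 n) (hw : w ∈ Icc 1 n) (hbw : b ≠ w)
    (ab aw : ℕ → ℝ) (abw : ℝ)
    (hab : ∀ i ∈ Icc 1 n \ {b, w}, 0 < ab i) (haw : ∀ i ∈ Icc 1 n \ {b, w}, 0 < aw i)
    (habw : 0 < abw)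
    (hD : (Icc 1 n \ {b, w}).Nonempty)
    (i0 : ℕ) (hi0 : i0 ∈ Icc 1 n \ {b, w}) (hi0D1 : ab i0 * aw i0 < abw)
    (heta : eta (Icc 1 n \ {b, w}) hD ab aw abw = epsi ab aw abw i0)
    (v : ℕ → ℝ) (hv0 : ∀ i ∈ Icc 1 n, 0 ≤ v i) (hv1 : (∑ i ∈ Icc 1 n, v i) = 1)
    (hW : epsW (Icc 1 n \ {b, w}) hD b w ab aw abw v = epsi ab aw abw i0 * v w) :
    v b = (abw - epsi ab aw abw i0) * v w ∧
    v i0 = (aw i0 + epsi ab aw abw i0) * v w := by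
  set ε := epsi ab aw abw i0 with hε
  have hab0 : 0 < ab i0 := hab i0 hi0
  have hεeq : ε * (ab i0 + 2) = abw - ab i0 * aw i0 := by
    rw [hε, epsi, abs_of_neg (by linarith), div_mul_cancel₀ _ (by linarith : ab i0 + 2 ≠ 0)]
    ring
  have hle : max |v b - ab i0 * v i0| (max |v i0 - aw i0 * v w| |v b - abw * v w|) ≤ ε * v w := by
    rw [← hW, epsW]
    exact Finset.le_sup'
      (fun i => max |v b - ab i * v i| (max |v i - aw i * v w| |v b - abw * v w|)) hi0
  have h1 : |v b - ab i0 * v i0| ≤ ε * v w := le_trans (le_max_left _ _) hle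
  have h2 : |v i0 - aw i0 * v w| ≤ ε * v w :=
    le_trans (le_trans (le_max_left _ _) (le_max_right _ _)) hle
  have h3 : |v b - abw * v w| ≤ ε * v w :=
    le_trans (le_trans (le_max_right _ _) (le_max_right _ _)) hle
  rw [abs_le] at h1 h2 h3
  obtain ⟨h1l, h1r⟩ := h1
  obtain ⟨h2l, h2r⟩ := h2
  obtain ⟨h3l, h3r⟩ := h3
  have hmul : ab i0 * v i0 ≤ ab i0 * (aw i0 * v w + ε * v w) := by
    have := mul_le_mul_of_nonneg_left (by linarith : v i0 ≤ aw i0 * v w + ε * v w) hab0.le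
    linarith
  have hεw : ε * (ab i0 + 2) * v w = (abw - ab i0 * aw i0) * v w := by rw [hεeq]
  have hvb : v b = (abw - ε) * v w := by nlinarith [hmul, h1r, h3l, hεw]
  refine ⟨hvb, ?_⟩
  have hlow : ab i0 * (aw i0 * v w + ε * v w) ≤ ab i0 * v i0 := by nlinarith [h1r, hvb, hεw]
  have := le_antisymm hmul hlow
  have := mul_left_cancel₀ hab0.ne' this
  linarith
end

section
/- Let j₀ ∈ D₂ with η = ε_{j₀}, and let W ∈ 𝒲 satisfy ε_W = ε_{j₀} · w_w. Then w_b = (a_{bw} + ε_{j₀}) · w_w and w_{j₀} = (a_{j₀w} − ε_{j₀}) · w_w. -/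
open Finset

/-- if η = ε_{j₀}, j₀ ∈ D₂ and ε_W = ε_{j₀}·w_w, then
w_b = (a_{bw} + ε_{j₀})·w_w and w_{j₀} = (a_{j₀w} − ε_{j₀})·w_w. -/
theorem stmt9 (n b w : ℕ) (hn : 3 ≤ n) (hb : b ∈ Icc 1 n) (hw : w ∈ Icc 1 n) (hbw : b ≠ w)
    (ab aw : ℕ → ℝ) (abw : ℝ)
    (hab : ∀ i ∈ Icc 1 n \ {b, w}, 0 < ab i) (haw : ∀ i ∈ Icc 1 n \ {b, w}, 0 < aw i)
    (habw : 0 < abw)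
    (hD : (Icc 1 n \ {b, w}).Nonempty)
    (j0 : ℕ) (hj0 : j0 ∈ Icc 1 n \ {b, w}) (hj0D2 : abw < ab j0 * aw j0)
    (heta : eta (Icc 1 n \ {b, w}) hD ab aw abw = epsi ab aw abw j0)
    (v : ℕ → ℝ) (hv0 : ∀ i ∈ Icc 1 n, 0 ≤ v i) (hv1 : (∑ i ∈ Icc 1 n, v i) = 1)
    (hW : epsW (Icc 1 n \ {b, w}) hD b w ab aw abw v = epsi ab aw abw j0 * v w) :
    v b = (abw + epsi ab aw abw j0) * v w ∧
    v j0 = (aw j0 - epsi ab aw abw j0) * v w := by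
  have habj : 0 < ab j0 := hab j0 hj0
  set ε := epsi ab aw abw j0 with hεdef
  have hε2 : (ab j0 + 2) * ε = ab j0 * aw j0 - abw := by
    rw [hεdef]
    unfold epsi
    rw [abs_of_pos (by linarith)]
    field_simp
  have key := Finset.le_sup' (fun i =>
    max |v b - ab i * v i| (max |v i - aw i * v w| |v b - abw * v w|)) hj0
  unfold epsW at hW
  rw [hW] at key
  have h1 : |v b - ab j0 * v j0| ≤ ε * v w := le_trans (le_max_left _ _) key
  have h2 : |v j0 - aw j0 * v w| ≤ ε * v w :=
    le_trans (le_trans (le_max_left _ _) (le_max_right _ _)) key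
  have h3 : |v b - abw * v w| ≤ ε * v w :=
    le_trans (le_trans (le_max_right _ _) (le_max_right _ _)) key
  rw [abs_le] at h1 h2 h3
  obtain ⟨h1a, h1b⟩ := h1
  obtain ⟨h2a, h2b⟩ := h2
  obtain ⟨h3a, h3b⟩ := h3
  have hε2w : (ab j0 + 2) * ε * v w = (ab j0 * aw j0 - abw) * v w := by rw [hε2]
  constructor
  · nlinarith [mul_le_mul_of_nonneg_left h2a habj.le, hε2w]
  · nlinarith [mul_le_mul_of_nonneg_left h2a habj.le,
      mul_le_mul_of_nonneg_left h2b habj.le, hε2w, habj]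
end

section
/- Let i₀ ∈ D₁, j₀ ∈ D₂ with η = ε_{i₀,j₀}, and let W ∈ 𝒲 satisfy ε_W = ε_{i₀,j₀} · w_w. Then w_{i₀} = (a_{i₀w} + ε_{i₀,j₀}) · w_w, w_{j₀} = (a_{j₀w} − ε_{i₀,j₀}) · w_w, and w_b = (a_{bi₀}·a_{i₀w} + (a_{bi₀}+1)·ε_{i₀,j₀}) · w_w = (a_{bj₀}·a_{j₀w} − (a_{bj₀}+1)·ε_{i₀,j₀}) · w_w. -/
open Finset

theorem epsW_le_iff {D : Finset ℕ} (hD : D.Nonempty) {b w : ℕ} {ab aw : ℕ → ℝ} {abw : ℝ}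
    {v : ℕ → ℝ} {c : ℝ} :
    epsW D hD b w ab aw abw v ≤ c ↔
      ∀ i ∈ D, |v b - ab i * v i| ≤ c ∧ |v i - aw i * v w| ≤ c ∧ |v b - abw * v w| ≤ c := by
  simp only [epsW, Finset.sup'_le_iff, max_le_iff]

theorem epsij_mul_eq_sub {ab aw : ℕ → ℝ} {i j : ℕ} (hi : 0 ≤ ab i) (hj : 0 ≤ ab j)
    (h : ab i * aw i ≤ ab j * aw j) :
    epsij ab aw i j * (ab i + ab j + 2) = ab j * aw j - ab i * aw i := by
  have hden : 0 < ab i + ab j + 2 := by linarith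
  rw [epsij, abs_of_nonpos (by linarith), div_mul_cancel₀ _ hden.ne']
  ring

section Chain

variable {x y p α e t : ℝ}

theorem le_of_abs_chain (hp : 0 ≤ p) (hxy : |x - p * y| ≤ e * t) (hy : |y - α * t| ≤ e * t) :
    x ≤ (p * α + (p + 1) * e) * t := by
  have := mul_le_mul_of_nonneg_left (abs_le.mp hy).2 hp
  linarith [(abs_le.mp hxy).2]

theorem ge_of_abs_chain (hp : 0 ≤ p) (hxy : |x - p * y| ≤ e * t) (hy : |y - α * t| ≤ e * t) :
    (p * α - (p + 1) * e) * t ≤ x := by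
  have := mul_le_mul_of_nonneg_left (abs_le.mp hy).1 hp
  linarith [(abs_le.mp hxy).1]

theorem eq_of_abs_chain_of_le (hp : 0 < p) (hxy : |x - p * y| ≤ e * t)
    (hy : |y - α * t| ≤ e * t) (hx : (p * α + (p + 1) * e) * t ≤ x) :
    y = (α + e) * t := by
  refine le_antisymm (by linarith [(abs_le.mp hy).2]) (le_of_mul_le_mul_left ?_ hp)
  linarith [(abs_le.mp hxy).2]

theorem eq_of_abs_chain_of_ge (hp : 0 < p) (hxy : |x - p * y| ≤ e * t)
    (hy : |y - α * t| ≤ e * t) (hx : x ≤ (p * α - (p + 1) * e) * t) :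
    y = (α - e) * t := by
  refine le_antisymm (le_of_mul_le_mul_left ?_ hp) (by linarith [(abs_le.mp hy).1])
  linarith [(abs_le.mp hxy).1]

end Chain

theorem stmt10_general (n b w : ℕ)
    (ab aw : ℕ → ℝ) (abw : ℝ)
    (hab : ∀ i ∈ Icc 1 n \ {b, w}, 0 < ab i)
    (hD : (Icc 1 n \ {b, w}).Nonempty)
    (i0 j0 : ℕ) (hi0 : i0 ∈ Icc 1 n \ {b, w}) (hj0 : j0 ∈ Icc 1 n \ {b, w})
    (hi0D1 : ab i0 * aw i0 < abw) (hj0D2 : abw < ab j0 * aw j0)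
    (v : ℕ → ℝ)
    (hW : epsW (Icc 1 n \ {b, w}) hD b w ab aw abw v = epsij ab aw i0 j0 * v w) :
    v i0 = (aw i0 + epsij ab aw i0 j0) * v w ∧
    v j0 = (aw j0 - epsij ab aw i0 j0) * v w ∧
    v b = (ab i0 * aw i0 + (ab i0 + 1) * epsij ab aw i0 j0) * v w ∧
    v b = (ab j0 * aw j0 - (ab j0 + 1) * epsij ab aw i0 j0) * v w := by
  have hp := hab i0 hi0
  have hq := hab j0 hj0
  obtain ⟨hbi, hiw, -⟩ := (epsW_le_iff hD).1 hW.le i0 hi0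
  obtain ⟨hbj, hjw, -⟩ := (epsW_le_iff hD).1 hW.le j0 hj0
  have hgap : (ab i0 * aw i0 + (ab i0 + 1) * epsij ab aw i0 j0) * v w =
      (ab j0 * aw j0 - (ab j0 + 1) * epsij ab aw i0 j0) * v w := by
    linear_combination v w * epsij_mul_eq_sub hp.le hq.le (hi0D1.trans hj0D2).le
  have hvb := le_antisymm (le_of_abs_chain hp.le hbi hiw) (hgap ▸ ge_of_abs_chain hq.le hbj hjw)
  exact ⟨eq_of_abs_chain_of_le hp hbi hiw hvb.ge,
    eq_of_abs_chain_of_ge hq hbj hjw (hgap ▸ hvb.le), hvb, hgap ▸ hvb⟩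

/-- if η = ε_{i₀,j₀} with i₀ ∈ D₁, j₀ ∈ D₂ and ε_W = ε_{i₀,j₀}·w_w, then the
weights of b, i₀ and j₀ are determined as stated. -/
theorem stmt10 (n b w : ℕ) (hn : 4 ≤ n) (hb : b ∈ Icc 1 n) (hw : w ∈ Icc 1 n) (hbw : b ≠ w)
    (ab aw : ℕ → ℝ) (abw : ℝ)
    (hab : ∀ i ∈ Icc 1 n \ {b, w}, 0 < ab i) (haw : ∀ i ∈ Icc 1 n \ {b, w}, 0 < aw i)
    (habw : 0 < abw)
    (hD : (Icc 1 n \ {b, w}).Nonempty)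
    (i0 j0 : ℕ) (hi0 : i0 ∈ Icc 1 n \ {b, w}) (hj0 : j0 ∈ Icc 1 n \ {b, w})
    (hi0D1 : ab i0 * aw i0 < abw) (hj0D2 : abw < ab j0 * aw j0)
    (heta : eta (Icc 1 n \ {b, w}) hD ab aw abw = epsij ab aw i0 j0)
    (v : ℕ → ℝ) (hv0 : ∀ i ∈ Icc 1 n, 0 ≤ v i) (hv1 : (∑ i ∈ Icc 1 n, v i) = 1)
    (hW : epsW (Icc 1 n \ {b, w}) hD b w ab aw abw v = epsij ab aw i0 j0 * v w) :
    v i0 = (aw i0 + epsij ab aw i0 j0) * v w ∧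
    v j0 = (aw j0 - epsij ab aw i0 j0) * v w ∧
    v b = (ab i0 * aw i0 + (ab i0 + 1) * epsij ab aw i0 j0) * v w ∧
    v b = (ab j0 * aw j0 - (ab j0 + 1) * epsij ab aw i0 j0) * v w :=
  stmt10_general n b w ab aw abw hab hD i0 j0 hi0 hj0 hi0D1 hj0D2 v hW
end

section
/- If η = ε_{i₀} for some i₀ ∈ D₁, then for all i ∈ D, max{a_{iw} − ε_{i₀}, (a_{bw} − 2ε_{i₀})/a_{bi}} ≤ min{a_{iw} + ε_{i₀}, a_{bw}/a_{bi}}. -/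
open Finset

/-- Lemma, statement 1. -/
theorem stmt11 (n b w : ℕ) (hn : 3 ≤ n) (hb : b ∈ Icc 1 n) (hw : w ∈ Icc 1 n) (hbw : b ≠ w)
    (ab aw : ℕ → ℝ) (abw : ℝ)
    (hab : ∀ i ∈ Icc 1 n \ {b, w}, 0 < ab i) (haw : ∀ i ∈ Icc 1 n \ {b, w}, 0 < aw i)
    (habw : 0 < abw)
    (hD : (Icc 1 n \ {b, w}).Nonempty)
    (i0 : ℕ) (hi0 : i0 ∈ Icc 1 n \ {b, w}) (hi0D1 : ab i0 * aw i0 < abw)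
    (heta : eta (Icc 1 n \ {b, w}) hD ab aw abw = epsi ab aw abw i0) :
    ∀ i ∈ Icc 1 n \ {b, w},
      max (aw i - epsi ab aw abw i0) ((abw - 2 * epsi ab aw abw i0) / ab i) ≤
        min (aw i + epsi ab aw abw i0) (abw / ab i) := by
  intro i hi
  set E := epsi ab aw abw i0 with hEdef
  have hbi : 0 < ab i := hab i hi
  have hbi0 : 0 < ab i0 := hab i0 hi0
  have hE0 : 0 ≤ E := div_nonneg (abs_nonneg _) (by linarith)
  -- E * (ab i0 + 2) = abw - ab i0 * aw i0
  have hEeq : E * (ab i0 + 2) = abw - ab i0 * aw i0 := by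
    rw [hEdef, epsi, abs_of_neg (by linarith : ab i0 * aw i0 - abw < 0),
      div_mul_cancel₀ _ (by linarith : ab i0 + 2 ≠ 0)]
    ring
  -- epsi i ≤ E
  have h1 : epsi ab aw abw i ≤ E := by
    rw [← heta, eta]
    calc epsi ab aw abw i ≤ max (epsi ab aw abw i) (epsij ab aw i i0) := le_max_left _ _
    _ ≤ _ := Finset.le_sup' (f := fun p => max (epsi ab aw abw p.1) (epsij ab aw p.1 p.2))
        (Finset.mk_mem_product hi hi0)
  have h2 : epsij ab aw i i0 ≤ E := by
    rw [← heta, eta]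
    calc epsij ab aw i i0 ≤ max (epsi ab aw abw i) (epsij ab aw i i0) := le_max_right _ _
    _ ≤ _ := Finset.le_sup' (f := fun p => max (epsi ab aw abw p.1) (epsij ab aw p.1 p.2))
        (Finset.mk_mem_product hi hi0)
  have h1' : |ab i * aw i - abw| ≤ E * (ab i + 2) := by
    rw [epsi, div_le_iff₀ (by linarith)] at h1
    linarith [h1]
  have h2' : |ab i * aw i - ab i0 * aw i0| ≤ E * (ab i + ab i0 + 2) := by
    rw [epsij, div_le_iff₀ (by linarith)] at h2
    linarith [h2]
  have hA1 := abs_le.mp h1'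
  have hA2 := abs_le.mp h2'
  apply max_le
  · apply le_min
    · linarith
    · rw [le_div_iff₀ hbi]
      nlinarith [hA2.2]
  · apply le_min
    · rw [div_le_iff₀ hbi]
      nlinarith [hA1.1]
    · gcongr
      linarith
end

section
/- If η = ε_{j₀} for some j₀ ∈ D₂, then for all i ∈ D, max{a_{iw} − ε_{j₀}, a_{bw}/a_{bi}} ≤ min{a_{iw} + ε_{j₀}, (a_{bw} + 2ε_{j₀})/a_{bi}}. -/
open Finset

/-- Lemma, statement 2. -/
theorem stmt12 (n b w : ℕ) (hn : 3 ≤ n) (hb : b ∈ Icc 1 n) (hw : w ∈ Icc 1 n) (hbw : b ≠ w)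
    (ab aw : ℕ → ℝ) (abw : ℝ)
    (hab : ∀ i ∈ Icc 1 n \ {b, w}, 0 < ab i) (haw : ∀ i ∈ Icc 1 n \ {b, w}, 0 < aw i)
    (habw : 0 < abw)
    (hD : (Icc 1 n \ {b, w}).Nonempty)
    (j0 : ℕ) (hj0 : j0 ∈ Icc 1 n \ {b, w}) (hj0D2 : abw < ab j0 * aw j0)
    (heta : eta (Icc 1 n \ {b, w}) hD ab aw abw = epsi ab aw abw j0) :
    ∀ i ∈ Icc 1 n \ {b, w},
      max (aw i - epsi ab aw abw j0) (abw / ab i) ≤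
        min (aw i + epsi ab aw abw j0) ((abw + 2 * epsi ab aw abw j0) / ab i) := by
  intro i hi
  set ε := epsi ab aw abw j0 with hε
  have habj0 : 0 < ab j0 := hab j0 hj0
  have habi : 0 < ab i := hab i hi
  -- value of ε
  have hεval : ε * (ab j0 + 2) = ab j0 * aw j0 - abw := by
    rw [hε, epsi, abs_of_pos (by linarith), div_mul_cancel₀]
    linarith
  have hεpos : 0 < ε := by
    rw [hε, epsi]
    exact div_pos (abs_pos.mpr (by linarith)) (by linarith)
  -- epsi i ≤ ε
  have h1 : epsi ab aw abw i ≤ ε := by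
    rw [← heta, eta]
    refine le_trans (le_max_left _ _) (Finset.le_sup'
      (fun p : ℕ × ℕ => max (epsi ab aw abw p.1) (epsij ab aw p.1 p.2))
      (mk_mem_product hi hi))
  have h2 : epsij ab aw i j0 ≤ ε := by
    rw [← heta, eta]
    refine le_trans (le_max_right _ _) (Finset.le_sup'
      (fun p : ℕ × ℕ => max (epsi ab aw abw p.1) (epsij ab aw p.1 p.2))
      (mk_mem_product hi hj0))
  have key1 : ab i * aw i - abw ≤ (ab i + 2) * ε := by
    have := (div_le_iff₀ (by linarith : (0:ℝ) < ab i + 2)).mp h1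
    have habs : ab i * aw i - abw ≤ |ab i * aw i - abw| := le_abs_self _
    nlinarith [this]
  have key2 : abw - ab i * aw i ≤ ab i * ε := by
    have := (div_le_iff₀ (by linarith : (0:ℝ) < ab i + ab j0 + 2)).mp h2
    have habs : ab j0 * aw j0 - ab i * aw i ≤ |ab i * aw i - ab j0 * aw j0| := by
      rw [abs_sub_comm]; exact le_abs_self _
    nlinarith [this, hεval]
  rw [max_le_iff, le_min_iff, le_min_iff]
  refine ⟨⟨by linarith, ?_⟩, ?_, ?_⟩
  · rw [le_div_iff₀ habi]; nlinarith [key1]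
  · rw [div_le_iff₀ habi]; nlinarith [key2]
  · gcongr; linarith
end

section
/- Suppose η = ε_{i₀} for some i₀ ∈ D₁, and let W be the weight set with w_b = (a_{bw} − ε_{i₀})/σ, w_{i₀} = (a_{i₀w} + ε_{i₀})/σ, w_w = 1/σ, w_i = min{a_{iw} + ε_{i₀}, a_{bw}/a_{bi}}/σ for i ∈ D\{i₀}, where σ = 1 + a_{bw} + a_{i₀w} + Σ_{i ∈ D, i ≠ i₀} min{a_{iw} + ε_{i₀}, a_{bw}/a_{bi}}. Then for every W' ∈ 𝒲, ε_{W'} ≥ ε_W = ε_{i₀}/σ, i.e., W minimizes ε over all normalized weight sets. -/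
open Finset

set_option maxHeartbeats 3200000 in
/-- the explicit candidate W is optimal: every W' ∈ 𝒲 has
ε_{W'} ≥ ε_W = ε_{i₀}/σ. -/
theorem stmt14 (n b w : ℕ) (hn : 3 ≤ n) (hb : b ∈ Icc 1 n) (hw : w ∈ Icc 1 n) (hbw : b ≠ w)
    (ab aw : ℕ → ℝ) (abw : ℝ)
    (hab : ∀ i ∈ Icc 1 n \ {b, w}, 0 < ab i) (haw : ∀ i ∈ Icc 1 n \ {b, w}, 0 < aw i)
    (habw : 0 < abw)
    (hD : (Icc 1 n \ {b, w}).Nonempty)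
    (i0 : ℕ) (hi0 : i0 ∈ Icc 1 n \ {b, w}) (hi0D1 : ab i0 * aw i0 < abw)
    (heta : eta (Icc 1 n \ {b, w}) hD ab aw abw = epsi ab aw abw i0)
    (hbig : epsi ab aw abw i0 < abw)
    (σ : ℝ)
    (hσ : σ = 1 + abw + aw i0 +
      ∑ i ∈ (Icc 1 n \ {b, w}).erase i0, min (aw i + epsi ab aw abw i0) (abw / ab i))
    (v : ℕ → ℝ)
    (hv : ∀ i, v i = if i = b then (abw - epsi ab aw abw i0) / σ
      else if i = w then 1 / σ
      else if i = i0 then (aw i0 + epsi ab aw abw i0) / σ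
      else min (aw i + epsi ab aw abw i0) (abw / ab i) / σ) :
    epsW (Icc 1 n \ {b, w}) hD b w ab aw abw v = epsi ab aw abw i0 / σ ∧
    ∀ v' : ℕ → ℝ, (∀ i ∈ Icc 1 n, 0 ≤ v' i) → (∑ i ∈ Icc 1 n, v' i) = 1 →
      epsi ab aw abw i0 / σ ≤ epsW (Icc 1 n \ {b, w}) hD b w ab aw abw v' := by
  have habi0 : 0 < ab i0 := hab i0 hi0
  have hawi0 : 0 < aw i0 := haw i0 hi0
  set ε := epsi ab aw abw i0 with hεdef
  have hεnn : 0 ≤ ε := by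
    rw [hεdef]; unfold epsi
    exact div_nonneg (abs_nonneg _) (by linarith)
  have h2ne : ab i0 + 2 ≠ 0 := by positivity
  have hεeq : ε * (ab i0 + 2) = abw - ab i0 * aw i0 := by
    rw [hεdef]; unfold epsi
    rw [abs_of_neg (by linarith : ab i0 * aw i0 - abw < 0)]
    rw [div_mul_cancel₀ _ h2ne]; ring
  clear_value ε
  have hmem : ∀ i ∈ Icc 1 n \ ({b, w} : Finset ℕ), i ∈ Icc 1 n ∧ i ≠ b ∧ i ≠ w := by
    intro i hi
    simp only [mem_sdiff, mem_insert, mem_singleton] at hi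
    exact ⟨hi.1, fun h => hi.2 (Or.inl h), fun h => hi.2 (Or.inr h)⟩
  have key1 : ∀ i ∈ Icc 1 n \ ({b, w} : Finset ℕ), abw - ab i * aw i ≤ ε * (ab i + 2) := by
    intro i hi
    have habi : 0 < ab i := hab i hi
    have hpi : (i, i0) ∈ ((Icc 1 n \ ({b, w} : Finset ℕ)) ×ˢ (Icc 1 n \ ({b, w} : Finset ℕ))) :=
      mem_product.mpr ⟨hi, hi0⟩
    have h : max (epsi ab aw abw i) (epsij ab aw i i0)
        ≤ eta (Icc 1 n \ {b, w}) hD ab aw abw := by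
      unfold eta
      exact Finset.le_sup'
        (fun p : ℕ × ℕ => max (epsi ab aw abw p.1) (epsij ab aw p.1 p.2)) hpi
    rw [heta] at h
    have h1 : epsi ab aw abw i ≤ ε := le_trans (le_max_left _ _) h
    unfold epsi at h1
    have h2 : |ab i * aw i - abw| ≤ ε * (ab i + 2) := by
      rw [div_le_iff₀ (by linarith : (0:ℝ) < ab i + 2)] at h1
      linarith
    have h3 : -(ab i * aw i - abw) ≤ |ab i * aw i - abw| := neg_le_abs _
    linarith
  have key2 : ∀ i ∈ Icc 1 n \ ({b, w} : Finset ℕ), ab i * aw i - abw ≤ ε * ab i := by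
    intro i hi
    have habi : 0 < ab i := hab i hi
    have hpi : (i, i0) ∈ ((Icc 1 n \ ({b, w} : Finset ℕ)) ×ˢ (Icc 1 n \ ({b, w} : Finset ℕ))) :=
      mem_product.mpr ⟨hi, hi0⟩
    have h : max (epsi ab aw abw i) (epsij ab aw i i0)
        ≤ eta (Icc 1 n \ {b, w}) hD ab aw abw := by
      unfold eta
      exact Finset.le_sup'
        (fun p : ℕ × ℕ => max (epsi ab aw abw p.1) (epsij ab aw p.1 p.2)) hpi
    rw [heta] at h
    have h1 : epsij ab aw i i0 ≤ ε := le_trans (le_max_right _ _) h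
    unfold epsij at h1
    have h2 : |ab i * aw i - ab i0 * aw i0| ≤ ε * (ab i + ab i0 + 2) := by
      rw [div_le_iff₀ (by linarith : (0:ℝ) < ab i + ab i0 + 2)] at h1
      linarith
    have h3 : ab i * aw i - ab i0 * aw i0 ≤ |ab i * aw i - ab i0 * aw i0| := le_abs_self _
    nlinarith
  have hσpos : 0 < σ := by
    have hs : 0 ≤ ∑ i ∈ (Icc 1 n \ ({b, w} : Finset ℕ)).erase i0,
        min (aw i + ε) (abw / ab i) := by
      apply Finset.sum_nonneg
      intro i hi
      have hiD := Finset.mem_of_mem_erase hi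
      exact le_min (by linarith [haw i hiD]) (div_nonneg habw.le (hab i hiD).le)
    rw [hσ]; linarith
  have hσne : σ ≠ 0 := ne_of_gt hσpos
  have habsdiv : ∀ X : ℝ, |X| ≤ ε → |X / σ| ≤ ε / σ := by
    intro X hX
    rw [abs_div, abs_of_pos hσpos]
    gcongr
  have hi0b : i0 ≠ b := (hmem i0 hi0).2.1
  have hi0w : i0 ≠ w := (hmem i0 hi0).2.2
  have hvb : v b = (abw - ε) / σ := by rw [hv]; simp
  have hvw : v w = 1 / σ := by
    rw [hv, if_neg (Ne.symm hbw), if_pos rfl]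
  have hvi0 : v i0 = (aw i0 + ε) / σ := by
    rw [hv, if_neg hi0b, if_neg hi0w, if_pos rfl]
  constructor
  · -- Part 1
    unfold epsW
    apply le_antisymm
    · apply Finset.sup'_le
      intro i hiD
      obtain ⟨hiIcc, hib, hiw⟩ := hmem i hiD
      have habi : 0 < ab i := hab i hiD
      have hawi : 0 < aw i := haw i hiD
      by_cases hii0 : i = i0
      · subst hii0
        rw [hvb, hvw, hvi0]
        have e1 : (abw - ε) / σ - ab i * ((aw i + ε) / σ)
            = (abw - ε - ab i * (aw i + ε)) / σ := by ring
        have e2 : (aw i + ε) / σ - aw i * (1 / σ) = ε / σ := by ring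
        have e3 : (abw - ε) / σ - abw * (1 / σ) = (-ε) / σ := by ring
        rw [e1, e2, e3]
        refine max_le ?_ (max_le ?_ ?_)
        · apply habsdiv
          have : abw - ε - ab i * (aw i + ε) = ε := by linear_combination -hεeq
          rw [this, abs_of_nonneg hεnn]
        · rw [abs_div, abs_of_pos hσpos, abs_of_nonneg hεnn]
        · apply habsdiv
          rw [abs_neg, abs_of_nonneg hεnn]
      · have hvi : v i = min (aw i + ε) (abw / ab i) / σ := by
          rw [hv, if_neg hib, if_neg hiw, if_neg hii0]
        rw [hvb, hvw, hvi]
        set m := min (aw i + ε) (abw / ab i) with hm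
        have e1 : (abw - ε) / σ - ab i * (m / σ) = (abw - ε - ab i * m) / σ := by ring
        have e2 : m / σ - aw i * (1 / σ) = (m - aw i) / σ := by ring
        have e3 : (abw - ε) / σ - abw * (1 / σ) = (-ε) / σ := by ring
        rw [e1, e2, e3]
        have hcan : ab i * (abw / ab i) = abw := by field_simp
        have hm_ub : ab i * m ≤ abw := by
          have h := min_le_right (aw i + ε) (abw / ab i)
          rw [← hm] at h
          nlinarith
        have hm_lb : abw - 2 * ε ≤ ab i * m := by
          rcases le_total (aw i + ε) (abw / ab i) with h | h
          · rw [hm, min_eq_left h]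
            have := key1 i hiD
            nlinarith
          · rw [hm, min_eq_right h, hcan]
            linarith
        refine max_le ?_ (max_le ?_ ?_)
        · apply habsdiv
          rw [abs_le]
          constructor <;> linarith
        · apply habsdiv
          rw [abs_le]
          constructor
          · rcases le_total (aw i + ε) (abw / ab i) with h | h
            · rw [hm, min_eq_left h]; linarith
            · rw [hm, min_eq_right h]
              have hkey := key2 i hiD
              have : (aw i - ε) * ab i ≤ abw := by nlinarith
              have h4 : aw i - ε ≤ abw / ab i := (le_div_iff₀ habi).mpr this
              linarith
          · rcases le_total (aw i + ε) (abw / ab i) with h | h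
            · rw [hm, min_eq_left h]; linarith
            · rw [hm, min_eq_right h]; linarith
        · apply habsdiv
          rw [abs_neg, abs_of_nonneg hεnn]
    · refine le_trans ?_ (Finset.le_sup'
        (fun i => max |v b - ab i * v i| (max |v i - aw i * v w| |v b - abw * v w|)) hi0)
      have h3 : |v b - abw * v w| = ε / σ := by
        rw [hvb, hvw]
        have e : (abw - ε) / σ - abw * (1 / σ) = -(ε / σ) := by ring
        rw [e, abs_neg, abs_of_nonneg (div_nonneg hεnn hσpos.le)]
      calc ε / σ = |v b - abw * v w| := h3.symm
        _ ≤ _ := le_max_of_le_right (le_max_right _ _)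
  · -- Part 2
    intro v' hnn hsum1
    obtain ⟨E, hE⟩ : ∃ E, epsW (Icc 1 n \ {b, w}) hD b w ab aw abw v' = E := ⟨_, rfl⟩
    rw [hE]
    have hfE : ∀ i ∈ Icc 1 n \ ({b, w} : Finset ℕ),
        max |v' b - ab i * v' i| (max |v' i - aw i * v' w| |v' b - abw * v' w|) ≤ E := by
      intro i hi
      rw [← hE]; unfold epsW
      exact Finset.le_sup'
        (fun i => max |v' b - ab i * v' i| (max |v' i - aw i * v' w| |v' b - abw * v' w|)) hi
    have hA : ∀ i ∈ Icc 1 n \ ({b, w} : Finset ℕ), |v' b - ab i * v' i| ≤ E :=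
      fun i hi => le_trans (le_max_left _ _) (hfE i hi)
    have hB : ∀ i ∈ Icc 1 n \ ({b, w} : Finset ℕ), |v' i - aw i * v' w| ≤ E :=
      fun i hi => le_trans (le_trans (le_max_left _ _) (le_max_right _ _)) (hfE i hi)
    have hC : |v' b - abw * v' w| ≤ E :=
      le_trans (le_trans (le_max_right _ _) (le_max_right _ _)) (hfE i0 hi0)
    have hE0 : 0 ≤ E := le_trans (abs_nonneg _) hC
    have htnn : 0 ≤ v' w := hnn w hw
    have c1 := abs_le.mp (hA i0 hi0)
    have c2 := abs_le.mp (hB i0 hi0)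
    have c3 := abs_le.mp hC
    have d : ab i0 * (v' i0 - aw i0 * v' w) ≤ ab i0 * E :=
      mul_le_mul_of_nonneg_left c2.2 habi0.le
    have hεt : ε * v' w ≤ E := by
      have step : (abw - ab i0 * aw i0) * v' w ≤ (ab i0 + 2) * E := by linarith [c1.2, c3.1, d]
      have step2 : ε * (ab i0 + 2) * v' w ≤ (ab i0 + 2) * E := by rw [hεeq]; exact step
      have hpos2 : (0:ℝ) < ab i0 + 2 := by linarith
      exact le_of_mul_le_mul_left
        (by linarith [step2] : (ab i0 + 2) * (ε * v' w) ≤ (ab i0 + 2) * E) hpos2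
    have hb1 : v' b ≤ ab i0 * aw i0 * v' w + (ab i0 + 1) * E := by linarith [c1.2, d]
    have hεeqE : ε * (ab i0 + 2) * E = (abw - ab i0 * aw i0) * E := by rw [hεeq]
    have hb_bound : ε * v' b ≤ (abw - ε) * E := by
      have h1 := mul_le_mul_of_nonneg_left hb1 hεnn
      have h2 := mul_le_mul_of_nonneg_left hεt (mul_nonneg habi0.le hawi0.le)
      linarith [h1, h2, hεeqE]
    have hi_bound1 : ∀ i ∈ Icc 1 n \ ({b, w} : Finset ℕ), ε * v' i ≤ (aw i + ε) * E := by
      intro i hi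
      have b2 := (abs_le.mp (hB i hi)).2
      have h1 := mul_le_mul_of_nonneg_left b2 hεnn
      have h2 := mul_le_mul_of_nonneg_left hεt (haw i hi).le
      have h3 := mul_le_mul_of_nonneg_left hE0 hεnn
      linarith [h1, h2, h3]
    have hi_bound2 : ∀ i ∈ Icc 1 n \ ({b, w} : Finset ℕ), ε * v' i ≤ (abw / ab i) * E := by
      intro i hi
      have habi : 0 < ab i := hab i hi
      have a1 := (abs_le.mp (hA i hi)).1
      have hchain : ab i * v' i ≤ ab i0 * aw i0 * v' w + (ab i0 + 2) * E := by
        linarith [hb1]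
      have h1 := mul_le_mul_of_nonneg_left hchain hεnn
      have h2 := mul_le_mul_of_nonneg_left hεt (mul_nonneg habi0.le hawi0.le)
      have habsE : ε * (ab i * v' i) ≤ abw * E := by linarith [h1, h2, hεeqE]
      rw [div_mul_eq_mul_div, le_div_iff₀ habi]
      linarith [habsE]
    have hminb : ∀ i ∈ (Icc 1 n \ ({b, w} : Finset ℕ)).erase i0,
        ε * v' i ≤ min (aw i + ε) (abw / ab i) * E := by
      intro i hi
      have hiD := Finset.mem_of_mem_erase hi
      rcases le_total (aw i + ε) (abw / ab i) with h | h
      · rw [min_eq_left h]; exact hi_bound1 i hiD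
      · rw [min_eq_right h]; exact hi_bound2 i hiD
    have hsub : ({b, w} : Finset ℕ) ⊆ Icc 1 n := by
      intro x hx
      simp only [mem_insert, mem_singleton] at hx
      rcases hx with rfl | rfl
      · exact hb
      · exact hw
    have hsplit : ∑ i ∈ (Icc 1 n \ ({b, w} : Finset ℕ)), v' i + (v' b + v' w) = 1 := by
      rw [← Finset.sum_pair hbw, Finset.sum_sdiff hsub, hsum1]
    have hDsum : ∑ i ∈ (Icc 1 n \ ({b, w} : Finset ℕ)), v' i
        = v' i0 + ∑ i ∈ (Icc 1 n \ ({b, w} : Finset ℕ)).erase i0, v' i :=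
      (Finset.add_sum_erase _ v' hi0).symm
    have hsum_le : ε * ∑ i ∈ (Icc 1 n \ ({b, w} : Finset ℕ)).erase i0, v' i
        ≤ (∑ i ∈ (Icc 1 n \ ({b, w} : Finset ℕ)).erase i0, min (aw i + ε) (abw / ab i)) * E := by
      rw [Finset.mul_sum, Finset.sum_mul]
      exact Finset.sum_le_sum hminb
    have hone : v' b + v' w + (v' i0 + ∑ i ∈ (Icc 1 n \ ({b, w} : Finset ℕ)).erase i0, v' i)
        = 1 := by rw [← hDsum]; linarith [hsplit]
    have hfinal : ε ≤ σ * E := by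
      have e1 : ε = ε * v' b + ε * v' w
          + (ε * v' i0 + ε * ∑ i ∈ (Icc 1 n \ ({b, w} : Finset ℕ)).erase i0, v' i) := by
        have := congrArg (fun x => ε * x) hone
        simp only [mul_one] at this
        linarith [this]
      have hbnd0 := hi_bound1 i0 hi0
      have : ε * v' b + ε * v' w
          + (ε * v' i0 + ε * ∑ i ∈ (Icc 1 n \ ({b, w} : Finset ℕ)).erase i0, v' i)
          ≤ (abw - ε) * E + E + ((aw i0 + ε) * E
          + (∑ i ∈ (Icc 1 n \ ({b, w} : Finset ℕ)).erase i0, min (aw i + ε) (abw / ab i)) * E) := by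
        linarith [hb_bound, hεt, hbnd0, hsum_le]
      calc ε = _ := e1
        _ ≤ _ := this
        _ = σ * E := by rw [hσ]; ring
    rw [div_le_iff₀ hσpos]
    linarith
end

section
/- For fixed positive constants c, d (with d ≥ 1) and nonnegative constants p_i, q_i > 0 for i in a finite index set, the function f(x) = (c + x) / (d + (m+2)x + Σ_i min{p_i + x, (q_i + (m+2)x)/r_i}) with r_i ≥ 1 and m ≥ 0 is strictly increasing on [0, ∞) provided c ≥ 0 and the denominator is positive, and more specifically: for a_{bi} ≥ 1, the function f(x) = (ε₀ + x) / (1 + a_{bw} + a_{i₀w} + (a_{bi₀}+2)x + Σ_{i ≠ i₀} min{a_{iw} + ε₀ + x, (a_{bw} + (a_{bi₀}+2)x)/a_{bi}}) is strictly increasing in x ≥ 0. -/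
/-!
Cross-multiplying, `f x < f y` for `x < y` says that `D / N` decreases, where `N x = ε₀ + x` and
`D` is the denominator. For an affine `D x = α + β x`,
`(α + β x) N y - (α + β y) N x = (α - β ε₀) (y - x)`, so `D / N` decreases as soon as
`β ε₀ ≤ α`, strictly if `β ε₀ < α`. This holds for every affine piece of the denominator (for the
`a_{bw} + (a_{bi₀} + 2) x` pieces it is the hypothesis `hkey`), and the property survives sums,
pointwise minima and division by positive constants.
-/

/-- Where `N > 0`, this says that `D / N` is antitone on `s`; cross-multiplying avoids `N = 0`. -/
def CrossAntitoneOn (N D : ℝ → ℝ) (s : Set ℝ) : Prop :=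
  ∀ ⦃x⦄, x ∈ s → ∀ ⦃y⦄, y ∈ s → x ≤ y → D y * N x ≤ D x * N y

namespace CrossAntitoneOn

variable {N D E : ℝ → ℝ} {s : Set ℝ}

theorem sum {ι : Type*} {t : Finset ι} {D : ι → ℝ → ℝ}
    (hD : ∀ i ∈ t, CrossAntitoneOn N (D i) s) :
    CrossAntitoneOn N (fun x => ∑ i ∈ t, D i x) s := fun x hx y hy hxy => by
  simp only [Finset.sum_mul]
  exact Finset.sum_le_sum fun i hi => hD i hi hx hy hxy

theorem min (hN : ∀ x ∈ s, 0 ≤ N x) (hD : CrossAntitoneOn N D s) (hE : CrossAntitoneOn N E s) :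
    CrossAntitoneOn N (fun x => min (D x) (E x)) s := fun x hx y hy hxy => by
  rw [min_mul_of_nonneg _ _ (hN y hy)]
  exact le_min
    ((mul_le_mul_of_nonneg_right (min_le_left _ _) (hN x hx)).trans (hD hx hy hxy))
    ((mul_le_mul_of_nonneg_right (min_le_right _ _) (hN x hx)).trans (hE hx hy hxy))

theorem div_const (hD : CrossAntitoneOn N D s) {c : ℝ} (hc : 0 ≤ c) :
    CrossAntitoneOn N (fun x => D x / c) s := fun x hx y hy hxy => by
  simp only [div_mul_eq_mul_div]
  exact div_le_div_of_nonneg_right (hD hx hy hxy) hc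

end CrossAntitoneOn

theorem affine_mul_sub_affine_mul (α β ε x y : ℝ) :
    (α + β * x) * (ε + y) - (α + β * y) * (ε + x) = (α - β * ε) * (y - x) := by
  ring

theorem crossAntitoneOn_of_affine {D : ℝ → ℝ} {α β ε : ℝ} (hD : ∀ x, D x = α + β * x)
    (h : β * ε ≤ α) (s : Set ℝ) : CrossAntitoneOn (fun x => ε + x) D s :=
  fun x _ y _ hxy => by
    have := affine_mul_sub_affine_mul α β ε x y
    rw [hD, hD]
    nlinarith [mul_nonneg (sub_nonneg.2 h) (sub_nonneg.2 hxy)]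

theorem strictMonoOn_div_affine_add {s : Set ℝ} {α β ε : ℝ} {E : ℝ → ℝ} (h : β * ε < α)
    (hE : CrossAntitoneOn (fun x => ε + x) E s) (hpos : ∀ x ∈ s, 0 < α + β * x + E x) :
    StrictMonoOn (fun x => (ε + x) / (α + β * x + E x)) s := fun x hx y hy hxy => by
  rw [div_lt_div_iff₀ (hpos x hx) (hpos y hy)]
  have := affine_mul_sub_affine_mul α β ε x y
  have := mul_pos (sub_pos.2 h) (sub_pos.2 hxy)
  have := hE hx hy hxy.le
  nlinarith

theorem stmt15_general (s : Finset ℕ) (ε0 abw ai0w abi0 : ℝ) (aiw abi : ℕ → ℝ)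
    (hε0 : 0 ≤ ε0) (hai0w : 0 < ai0w) (habi0 : 1 ≤ abi0)
    (haiw : ∀ i ∈ s, 0 < aiw i) (habi : ∀ i ∈ s, 1 ≤ abi i)
    (hkey : (abi0 + 2) * ε0 ≤ abw) :
    StrictMonoOn (fun x : ℝ => (ε0 + x) /
      (1 + abw + ai0w + (abi0 + 2) * x +
        ∑ i ∈ s, min (aiw i + ε0 + x) ((abw + (abi0 + 2) * x) / abi i)))
      (Set.Ici 0) := by
  have hk : 0 ≤ (abi0 + 2) * ε0 := by positivity
  have hN : ∀ x ∈ Set.Ici (0 : ℝ), 0 ≤ ε0 + x := fun x hx => add_nonneg hε0 hx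
  refine strictMonoOn_div_affine_add (by linarith) ?_ fun x hx => ?_
  · refine CrossAntitoneOn.sum fun i hi => .min hN ?_ ?_
    · exact crossAntitoneOn_of_affine (α := aiw i + ε0) (β := 1) (fun x => by ring)
        (by linarith [haiw i hi]) _
    · exact (crossAntitoneOn_of_affine (fun _ => rfl) hkey _).div_const (by linarith [habi i hi])
  · have hkx : 0 ≤ (abi0 + 2) * x := mul_nonneg (by linarith) hx
    have hterm : ∀ i ∈ s, 0 ≤ min (aiw i + ε0 + x) ((abw + (abi0 + 2) * x) / abi i) :=
      fun i hi => le_min (by linarith [haiw i hi, hN x hx])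
        (div_nonneg (by linarith) (by linarith [habi i hi]))
    linarith [Finset.sum_nonneg hterm]

/-- the function f appearing in the optimality proof is strictly increasing
on [0, ∞). -/
theorem stmt15 (s : Finset ℕ) (ε0 abw ai0w abi0 : ℝ) (aiw abi : ℕ → ℝ)
    (hε0 : 0 ≤ ε0) (habw : 0 < abw) (hai0w : 0 < ai0w) (habi0 : 1 ≤ abi0)
    (haiw : ∀ i ∈ s, 0 < aiw i) (habi : ∀ i ∈ s, 1 ≤ abi i)
    (hkey : (abi0 + 2) * ε0 ≤ abw) :
    StrictMonoOn (fun x : ℝ => (ε0 + x) /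
      (1 + abw + ai0w + (abi0 + 2) * x +
        ∑ i ∈ s, min (aiw i + ε0 + x) ((abw + (abi0 + 2) * x) / abi i)))
      (Set.Ici 0) :=
  stmt15_general s ε0 abw ai0w abi0 aiw abi hε0 hai0w habi0 haiw habi hkey
end

section
/- Suppose η = ε_{i₀} for some i₀ ∈ D₁ and all comparison values satisfy 1 ≤ a_{bi}, a_{iw} and a_{bi} ≤ a_{bw}. Then the optimal objective value ε* = ε_{i₀}/σ satisfies ε* ≤ (a_{bw} − 1)/(3(n − 1 + a_{bw})), where σ = 1 + a_{bw} + a_{i₀w} + Σ_{i ∈ D, i ≠ i₀} min{a_{iw} + ε_{i₀}, a_{bw}/a_{bi}}. -/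
open Finset

/-- Saaty-scale bound on ε* in the D₁ case. -/
theorem stmt16 (n b w : ℕ) (hn : 3 ≤ n) (hb : b ∈ Icc 1 n) (hw : w ∈ Icc 1 n) (hbw : b ≠ w)
    (ab aw : ℕ → ℝ) (abw : ℝ)
    (hab : ∀ i ∈ Icc 1 n \ {b, w}, 1 ≤ ab i) (haw : ∀ i ∈ Icc 1 n \ {b, w}, 1 ≤ aw i)
    (habw : 1 ≤ abw) (habd : ∀ i ∈ Icc 1 n \ {b, w}, ab i ≤ abw)
    (hD : (Icc 1 n \ {b, w}).Nonempty)
    (i0 : ℕ) (hi0 : i0 ∈ Icc 1 n \ {b, w}) (hi0D1 : ab i0 * aw i0 < abw)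
    (heta : eta (Icc 1 n \ {b, w}) hD ab aw abw = epsi ab aw abw i0)
    (σ : ℝ)
    (hσ : σ = 1 + abw + aw i0 +
      ∑ i ∈ (Icc 1 n \ {b, w}).erase i0, min (aw i + epsi ab aw abw i0) (abw / ab i)) :
    epsi ab aw abw i0 / σ ≤ (abw - 1) / (3 * ((n : ℝ) - 1 + abw)) := by
  set D : Finset ℕ := Icc 1 n \ {b, w} with hDdef
  have hab0 := hab i0 hi0
  have haw0 := haw i0 hi0
  have hεnn : 0 ≤ epsi ab aw abw i0 :=
    div_nonneg (abs_nonneg _) (by linarith)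
  -- bound on epsi
  have hεle : epsi ab aw abw i0 ≤ (abw - 1) / 3 := by
    unfold epsi
    rw [abs_of_neg (by linarith)]
    apply div_le_div₀ (by linarith) (by nlinarith) (by norm_num) (by linarith)
  -- cardinality of D
  have hsub : ({b, w} : Finset ℕ) ⊆ Icc 1 n := by
    intro x hx
    rcases Finset.mem_insert.mp hx with h | h
    · exact h ▸ hb
    · exact (Finset.mem_singleton.mp h) ▸ hw
  have hcardD : D.card = n - 2 := by
    rw [hDdef, Finset.card_sdiff_of_subset hsub, Nat.card_Icc, Finset.card_pair hbw]
    omega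
  have hcardE : (D.erase i0).card = n - 3 := by
    rw [Finset.card_erase_of_mem hi0, hcardD]; omega
  -- each min term ≥ 1
  have hmin : ∀ i ∈ D.erase i0, (1 : ℝ) ≤ min (aw i + epsi ab aw abw i0) (abw / ab i) := by
    intro i hi
    have hiD := Finset.mem_of_mem_erase hi
    refine le_min (by linarith [haw i hiD]) ?_
    rw [le_div_iff₀ (by linarith [hab i hiD])]
    simpa using habd i hiD
  have hsum : ((n : ℝ) - 3) ≤
      ∑ i ∈ D.erase i0, min (aw i + epsi ab aw abw i0) (abw / ab i) := by
    have := Finset.card_nsmul_le_sum (D.erase i0)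
      (fun i => min (aw i + epsi ab aw abw i0) (abw / ab i)) 1 hmin
    rw [hcardE] at this
    have hcast : ((n - 3 : ℕ) : ℝ) = (n : ℝ) - 3 := by
      have : (3 : ℕ) ≤ n := hn
      push_cast [Nat.cast_sub this]
      ring
    simpa [nsmul_eq_mul, hcast] using this
  have hσge : (n : ℝ) - 1 + abw ≤ σ := by rw [hσ]; linarith
  have hn3 : (3 : ℝ) ≤ (n : ℝ) := by exact_mod_cast hn
  have hpos : (0 : ℝ) < (n : ℝ) - 1 + abw := by linarith
  have hσpos : 0 < σ := by linarith
  rw [div_le_div_iff₀ hσpos (by positivity)]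
  nlinarith [mul_le_mul hεle hσge (by linarith) (by linarith : (0:ℝ) ≤ (abw - 1)/3)]
end

section
/- For the pairwise comparison system with n ≥ 3 criteria defined by a_{1n} = a_{bw}, a_{12} = a_{2n} = 1, and a_{1i} = a_{bw}, a_{in} = 1 for i ∈ {3,...,n−1} (best criterion c₁, worst criterion c_n), the maximum η of the quantities ε_i and ε_{i,j} equals ε₂ = (a_{bw} − 1)/3, attained for 2 ∈ D₁, and the resulting optimal objective value is ε* = (a_{bw} − 1)/(3(n − 1 + a_{bw})). -/
open Finset

/-- for the extremal PCS with b = 1, w = n, a_{1n} = a_{bw},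
a_{12} = a_{2n} = 1 and a_{1i} = a_{bw}, a_{in} = 1 for 3 ≤ i ≤ n−1, the maximum η equals
ε₂ = (a_{bw} − 1)/3 and ε* = (a_{bw} − 1)/(3(n − 1 + a_{bw})). -/
theorem stmt17 (n : ℕ) (hn : 3 ≤ n) (abw : ℝ) (habw : 1 ≤ abw)
    (ab aw : ℕ → ℝ)
    (hab : ∀ i, ab i = if i = 2 then 1 else abw) (haw : ∀ i, aw i = 1)
    (hD : (Icc 1 n \ {1, n}).Nonempty)
    (σ : ℝ)
    (hσ : σ = 1 + abw + aw 2 +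
      ∑ i ∈ (Icc 1 n \ {1, n}).erase 2, min (aw i + epsi ab aw abw 2) (abw / ab i)) :
    eta (Icc 1 n \ {1, n}) hD ab aw abw = epsi ab aw abw 2 ∧
    epsi ab aw abw 2 = (abw - 1) / 3 ∧
    epsi ab aw abw 2 / σ = (abw - 1) / (3 * ((n : ℝ) - 1 + abw)) := by
  have hpos : (0:ℝ) < abw := lt_of_lt_of_le one_pos habw
  have hab2 : ab 2 = 1 := by rw [hab]; simp
  have h2 : epsi ab aw abw 2 = (abw - 1) / 3 := by
    simp only [epsi, hab2, haw]
    rw [abs_of_nonpos (by linarith)]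
    ring_nf
  have hepsnn : (0:ℝ) ≤ (abw - 1) / 3 := by
    apply div_nonneg <;> linarith
  have hepsi : ∀ i, epsi ab aw abw i ≤ (abw - 1) / 3 := by
    intro i
    by_cases hi : i = 2
    · rw [hi, h2]
    · simp only [epsi, hab, if_neg hi, haw]
      simp [hepsnn]
  have hepsij : ∀ i j, epsij ab aw i j ≤ (abw - 1) / 3 := by
    intro i j
    unfold epsij
    rw [haw, haw, hab i, hab j, mul_one, mul_one]
    by_cases hi : i = 2 <;> by_cases hj : j = 2
    · subst hi; subst hj
      rw [if_pos rfl]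
      simpa using hepsnn
    · subst hi
      rw [if_pos rfl, if_neg hj, abs_of_nonpos (by linarith)]
      exact div_le_div₀ (by linarith) (by linarith) (by norm_num) (by linarith)
    · subst hj
      rw [if_neg hi, if_pos rfl, abs_of_nonneg (by linarith)]
      exact div_le_div₀ (by linarith) (by linarith) (by norm_num) (by linarith)
    · rw [if_neg hi, if_neg hj]
      simpa using hepsnn
  have h2D : 2 ∈ Icc 1 n \ {1, n} := by
    simp only [mem_sdiff, mem_Icc, mem_insert, mem_singleton]
    omega
  have heta : eta (Icc 1 n \ {1, n}) hD ab aw abw = (abw - 1) / 3 := by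
    unfold eta
    apply le_antisymm
    · exact Finset.sup'_le _ _ fun p _ => max_le (hepsi p.1) (hepsij p.1 p.2)
    · have hmem : ((2:ℕ), (2:ℕ)) ∈ (Icc 1 n \ {1, n}) ×ˢ (Icc 1 n \ {1, n}) :=
        Finset.mem_product.mpr ⟨h2D, h2D⟩
      refine le_trans ?_ (Finset.le_sup'
        (f := fun p : ℕ × ℕ => max (epsi ab aw abw p.1) (epsij ab aw p.1 p.2)) hmem)
      rw [← h2]
      exact le_max_left _ _
  have hcard : ((Icc 1 n \ {1, n}).erase 2).card = n - 3 := by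
    rw [Finset.card_erase_of_mem h2D, Finset.card_sdiff_of_subset]
    · rw [Nat.card_Icc, Finset.card_pair (by omega : 1 ≠ n)]; omega
    · intro x hx
      simp only [mem_insert, mem_singleton] at hx
      simp only [mem_Icc]
      omega
  have hsum : ∑ i ∈ (Icc 1 n \ {1, n}).erase 2,
      min (aw i + epsi ab aw abw 2) (abw / ab i) = (n:ℝ) - 3 := by
    rw [Finset.sum_congr rfl (fun i hi => ?_), Finset.sum_const, hcard]
    · rw [nsmul_eq_mul, mul_one, Nat.cast_sub hn]
      norm_num
    · have hi2 : i ≠ 2 := (Finset.mem_erase.mp hi).1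
      rw [hab, if_neg hi2, haw, div_self hpos.ne', min_eq_right]
      rw [h2]; linarith
  have hσeq : σ = (n:ℝ) - 1 + abw := by
    rw [hσ, haw, hsum]; ring
  refine ⟨heta.trans h2.symm, h2, ?_⟩
  rw [h2, hσeq, div_div]
end
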